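/- arXiv:2411.18291 — 8 statements merged into one kernel-verified Lean document; each statement's English description precedes it below -/
import Mathlib

section
/- Let p ≥ q be a prime, M ∈ F_p^{q×r} a Vandermonde matrix with distinct row parameters, and consider the blowup Ω_0 whose vertex set is [q] × F_p. For each u ∈ F_p^r, let Q_u be the q-clique {(i, (Mu)_i) : i ∈ [q]}. Then the family {Q_u : u ∈ F_p^r} is a partition of the edge set of Ω_0, i.e., every 'transversal' r-set {(i, x_i) : i ∈ I} with I ∈ binom([q], r) lies in exactly one Q_u. -/
/-- In the `p`-blowup of `K^r_q`, the cliques `Q_u = {(i,(Mu)_i)}`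
for `u ∈ F_p^r` decompose the edge set: every transversal `r`-set `{(i,x_i) : i ∈ I}`
lies in exactly one `Q_u`, i.e. there is a unique `u` with `(Mu)_i = x_i` on `I`. -/
theorem stmt1 (p q r : ℕ) (hp : p.Prime) (hpq : q ≤ p) (hqr : r < q) (hr : 1 ≤ r)
    (y : Fin q → ZMod p) (hy : Function.Injective y)
    (M : Matrix (Fin q) (Fin r) (ZMod p)) (hM : ∀ i j, M i j = y i ^ (j : ℕ))
    (I : Finset (Fin q)) (hI : I.card = r) (x : Fin q → ZMod p) :
    ∃! u : Fin r → ZMod p, ∀ i ∈ I, M.mulVec u i = x i := by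
  haveI : Fact p.Prime := ⟨hp⟩
  set e := I.orderEmbOfFin hI with he
  set A : Matrix (Fin r) (Fin r) (ZMod p) := Matrix.vandermonde (fun k => y (e k)) with hA
  have hAdet : IsUnit A.det := by
    rw [isUnit_iff_ne_zero, hA, Matrix.det_vandermonde_ne_zero_iff]
    exact hy.comp (I.orderEmbOfFin hI).injective
  haveI := A.invertibleOfIsUnitDet hAdet
  -- equivalence of the two systems
  have key : ∀ u : Fin r → ZMod p,
      (∀ i ∈ I, M.mulVec u i = x i) ↔ A.mulVec u = fun k => x (e k) := by
    intro u
    have hAM : ∀ k, A.mulVec u k = M.mulVec u (e k) := by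
      intro k
      simp only [Matrix.mulVec, dotProduct, hA, Matrix.vandermonde, hM]
      rfl
    constructor
    · intro h
      funext k
      rw [hAM]
      exact h (e k) (I.orderEmbOfFin_mem hI k)
    · intro h i hi
      obtain ⟨k, hk⟩ := (I.range_orderEmbOfFin hI ▸ Finset.mem_coe.mpr hi : i ∈ Set.range e)
      have := congrFun h k
      rw [hAM] at this
      rw [← hk]
      exact this
  refine ⟨A⁻¹.mulVec (fun k => x (e k)), ?_, ?_⟩
  · exact (key _).mpr (by rw [Matrix.mulVec_mulVec, Matrix.mul_nonsing_inv _ hAdet, Matrix.one_mulVec])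
  · intro u hu
    replace hu := (key u).mp hu
    rw [← hu, Matrix.mulVec_mulVec, Matrix.nonsing_inv_mul _ hAdet, Matrix.one_mulVec]
end

section
/- For every pair of integers q > r ≥ 1 and every edge e of the complete r-graph K^r_{q+r} on q+r vertices, there exists an integer vector Ψ indexed by the q-subsets Q of [q+r] such that for every r-subset e' of [q+r], the sum of Ψ_Q over all q-subsets Q containing e' equals N·1_{e'=e}, where N = q(q-1)···(q-r+1), and moreover every entry satisfies |Ψ_Q| ≤ 2^q · r!. -/
/-!
Take `Ψ_Q = (r - b)! · (-(q - r))_b` with `b = |e \ Q|`, a falling factorial at a negative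
integer. For an `r`-set `e'` with `m = |e \ e'|`, the complements `S = Qᶜ` of the `q`-sets
`Q ⊇ e'` are the `r`-subsets of `e'ᶜ`, and `|e \ Q| = |S ∩ e|`. Sorting them by `b` gives
`(∂Ψ)_{e'} = ∑_b C(m, b) C(q - m, r - b) (r - b)! (-(q - r))_b
          = (q - m)_{r - m} ∑_b C(m, b) (-(q - r))_b (q - r)_{m - b}`,
and by Chu–Vandermonde the last sum is the falling factorial `(0)_m`, which vanishes unless
`m = 0`, i.e. `e' = e`. The bound holds because
`|(-x)_b| = x (x + 1) ⋯ (x + b - 1) = b! C(x + b - 1, b)`.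
-/

open Finset Polynomial

open scoped Nat

section Counting

variable {α : Type*} [DecidableEq α]

lemma card_powersetCard_filter_card_inter_eq (U D : Finset α) {k i : ℕ} (hik : i ≤ k) :
    #{S ∈ U.powersetCard k | #(S ∩ D) = i}
      = (#(U ∩ D)).choose i * (#(U \ D)).choose (k - i) := by
  rw [← card_powersetCard, ← card_powersetCard, ← card_product]
  refine card_nbij' (fun S => (S ∩ D, S \ D)) (fun p => p.1 ∪ p.2) ?_ ?_ ?_ ?_
  · intro S hS
    simp only [coe_filter, mem_powersetCard, Set.mem_ofPred_eq] at hS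
    obtain ⟨⟨hSU, hSk⟩, hSi⟩ := hS
    have := card_sdiff_add_card_inter S D
    simp only [coe_product, Set.mem_prod, mem_coe, mem_powersetCard]
    refine ⟨⟨inter_subset_inter_right hSU, hSi⟩, sdiff_subset_sdiff hSU subset_rfl, by omega⟩
  · rintro ⟨A, B⟩ hAB
    simp only [coe_product, Set.mem_prod, mem_coe, mem_powersetCard] at hAB
    obtain ⟨⟨hAU, hA⟩, hBU, hB⟩ := hAB
    have hdisj : Disjoint A B :=
      disjoint_of_subset_left (hAU.trans inter_subset_right)
        (disjoint_of_subset_right hBU disjoint_sdiff)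
    have hAD : (A ∪ B) ∩ D = A := by
      rw [union_inter_distrib_right, inter_eq_left.2 (hAU.trans inter_subset_right),
        disjoint_iff_inter_eq_empty.1 (disjoint_of_subset_left hBU sdiff_disjoint), union_empty]
    simp only [coe_filter, mem_powersetCard, Set.mem_ofPred_eq]
    refine ⟨⟨union_subset (hAU.trans inter_subset_left) (hBU.trans sdiff_subset), ?_⟩,
      by rw [hAD, hA]⟩
    rw [card_union_of_disjoint hdisj, hA, hB]
    omega
  · intro S _
    exact sup_inf_sdiff S D
  · rintro ⟨A, B⟩ hAB
    simp only [coe_product, Set.mem_prod, mem_coe, mem_powersetCard] at hAB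
    obtain ⟨⟨hAU, -⟩, hBU, -⟩ := hAB
    have hAD : A ⊆ D := hAU.trans inter_subset_right
    have hBD : Disjoint B D := disjoint_of_subset_left hBU sdiff_disjoint
    ext x <;> simp only [mem_inter, mem_union, mem_sdiff] <;>
      grind [disjoint_left]

lemma sum_powersetCard_card_inter {M : Type*} [AddCommMonoid M] (U D : Finset α) (k : ℕ)
    (g : ℕ → M) :
    ∑ S ∈ U.powersetCard k, g #(S ∩ D)
      = ∑ i ∈ range (k + 1), ((#(U ∩ D)).choose i * (#(U \ D)).choose (k - i)) • g i := by
  have hmaps : ∀ S ∈ U.powersetCard k, #(S ∩ D) ∈ range (k + 1) := fun S hS =>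
    mem_range_succ_iff.2 ((card_le_card inter_subset_left).trans (mem_powersetCard.1 hS).2.le)
  rw [← sum_fiberwise_of_maps_to' hmaps]
  refine sum_congr rfl fun i hi => ?_
  rw [sum_const, card_powersetCard_filter_card_inter_eq U D (mem_range_succ_iff.1 hi)]

lemma sum_filter_superset_eq_sum_powersetCard_compl [Fintype α] {M : Type*} [AddCommMonoid M]
    {q r : ℕ} (hα : Fintype.card α = q + r) (e : Finset α) (f : Finset α → M) :
    ∑ Q ∈ univ.filter (fun Q : Finset α => #Q = q ∧ e ⊆ Q), f Q
      = ∑ S ∈ eᶜ.powersetCard r, f Sᶜ := by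
  refine sum_nbij' compl compl ?_ ?_ (fun Q _ => compl_compl Q) (fun S _ => compl_compl S)
    (fun Q _ => by rw [compl_compl])
  · intro Q hQ
    rw [mem_filter] at hQ
    rw [mem_powersetCard, compl_subset_compl, card_compl, hα, hQ.2.1]
    exact ⟨hQ.2.2, by omega⟩
  · intro S hS
    rw [mem_powersetCard] at hS
    have := card_le_univ S
    rw [mem_filter, card_compl, hα, hS.2]
    refine ⟨mem_univ _, ?_, subset_compl_comm.1 hS.1⟩
    omega

end Counting

lemma sum_range_choose_mul_descPochhammer_eval_neg (x : ℤ) (m : ℕ) :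
    ∑ i ∈ range (m + 1),
        (m.choose i : ℤ) * ((descPochhammer ℤ i).eval (-x) * (descPochhammer ℤ (m - i)).eval x)
      = if m = 0 then 1 else 0 := by
  have h := Ring.descPochhammer_smeval_add m (Commute.all (-x) x)
  rw [neg_add_cancel, ← eval_eq_smeval, descPochhammer_eval_zero,
    Nat.sum_antidiagonal_eq_sum_range_succ_mk] at h
  simpa only [eval_eq_smeval] using h.symm

lemma descPochhammer_eval_neg_natCast {R : Type*} [CommRing R] (x b : ℕ) :
    (descPochhammer R b).eval (-(x : R)) = (-1) ^ b * x.ascFactorial b := by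
  have h := ascPochhammer_eval_neg_eq_descPochhammer R (-(x : R)) b
  rw [neg_neg, ← ascPochhammer_eval_cast, ascPochhammer_nat_eq_ascFactorial] at h
  rw [h, ← mul_assoc, ← mul_pow, neg_one_mul, neg_neg, one_pow, one_mul]

noncomputable def localDecoderWeight (q r b : ℕ) : ℤ :=
  (r - b)! * (descPochhammer ℤ b).eval (-((q - r : ℕ) : ℤ))

lemma abs_localDecoderWeight_le {q r b : ℕ} (hrq : r ≤ q) (hb : b ≤ r) :
    |localDecoderWeight q r b| ≤ 2 ^ q * r ! := by
  have hfact : (r - b)! * b ! ≤ r ! := by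
    rw [mul_comm]
    exact Nat.le_of_dvd (Nat.factorial_pos r) (Nat.factorial_mul_factorial_dvd_factorial hb)
  have hchoose : (q - r + b - 1).choose b ≤ 2 ^ q :=
    (Nat.choose_le_two_pow _ _).trans (Nat.pow_le_pow_right two_pos (by omega))
  rw [localDecoderWeight, descPochhammer_eval_neg_natCast, abs_mul, abs_mul, abs_pow, abs_neg,
    abs_one, one_pow, one_mul, Nat.abs_cast, Nat.abs_cast,
    Nat.ascFactorial_eq_factorial_mul_choose']
  calc ((r - b)! : ℤ) * ((b ! * (q - r + b - 1).choose b : ℕ) : ℤ)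
      = (((r - b)! * b ! : ℕ) : ℤ) * ((q - r + b - 1).choose b : ℕ) := by push_cast; ring
    _ ≤ (r ! : ℕ) * (2 ^ q : ℕ) := by gcongr
    _ = 2 ^ q * r ! := by push_cast; ring

lemma sum_choose_mul_choose_smul_localDecoderWeight {q r m : ℕ} (hrq : r ≤ q) (hmr : m ≤ r) :
    ∑ i ∈ range (r + 1), (m.choose i * (q - m).choose (r - i)) • localDecoderWeight q r i
      = if m = 0 then (q.descFactorial r : ℤ) else 0 := by
  have hterm : ∀ i ∈ range (m + 1),
      (m.choose i * (q - m).choose (r - i)) • localDecoderWeight q r i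
        = ((q - m).descFactorial (r - m) : ℤ) * ((m.choose i : ℤ) *
          ((descPochhammer ℤ i).eval (-((q - r : ℕ) : ℤ)) *
            (descPochhammer ℤ (m - i)).eval ((q - r : ℕ) : ℤ))) := by
    intro i hi
    have him := mem_range_succ_iff.1 hi
    have hfall : (r - i)! * (q - m).choose (r - i)
        = (q - m).descFactorial (r - m) * (q - r).descFactorial (m - i) := by
      rw [← Nat.descFactorial_eq_factorial_mul_choose,
        ← Nat.descFactorial_mul_descFactorial (show r - m ≤ r - i by omega), mul_comm,
        show q - m - (r - m) = q - r by omega, show r - i - (r - m) = m - i by omega]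
    have hfallℤ := congrArg (Nat.cast (R := ℤ)) hfall
    push_cast at hfallℤ
    rw [localDecoderWeight, descPochhammer_eval_eq_descFactorial, nsmul_eq_mul]
    push_cast
    linear_combination
      ((m.choose i : ℤ) * (descPochhammer ℤ i).eval (-((q - r : ℕ) : ℤ))) * hfallℤ
  rw [← sum_subset (range_subset_range.2 (by omega : m + 1 ≤ r + 1)), sum_congr rfl hterm,
    ← mul_sum, sum_range_choose_mul_descPochhammer_eval_neg]
  · rcases eq_or_ne m 0 with rfl | hm
    · simp
    · simp [hm]
  · intro i _ hi
    rw [Nat.choose_eq_zero_of_lt (by simpa using hi), zero_mul, zero_smul]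

theorem stmt2_general (q r : ℕ) (hqr : r < q)
    (e : Finset (Fin (q + r))) (he : e.card = r) :
    ∃ Ψ : Finset (Fin (q + r)) → ℤ,
      (∀ e' : Finset (Fin (q + r)), e'.card = r →
        ∑ Q ∈ univ.filter (fun Q : Finset (Fin (q + r)) => Q.card = q ∧ e' ⊆ Q), Ψ Q
          = if e' = e then (q.descFactorial r : ℤ) else 0) ∧
      ∀ Q : Finset (Fin (q + r)), |Ψ Q| ≤ 2 ^ q * r.factorial := by
  refine ⟨fun Q => localDecoderWeight q r #(e \ Q), fun e' he' => ?_, fun Q =>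
    abs_localDecoderWeight_le hqr.le ((card_le_card sdiff_subset).trans he.le)⟩
  have hcompl : #e'ᶜ = q := by rw [card_compl, Fintype.card_fin, he']; omega
  have hm : #(e'ᶜ ∩ e) = #(e \ e') := by rw [inter_comm, ← sdiff_eq_inter_compl]
  have hqm : #(e'ᶜ \ e) = q - #(e \ e') := by
    have := card_sdiff_add_card_inter e'ᶜ e
    omega
  have hmr : #(e \ e') ≤ r := (card_le_card sdiff_subset).trans he.le
  have hm0 : #(e \ e') = 0 ↔ e' = e := by
    rw [card_eq_zero, sdiff_eq_empty_iff_subset]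
    exact ⟨fun h => (eq_of_subset_of_card_le h (by rw [he, he'])).symm, fun h => h ▸ subset_rfl⟩
  rw [sum_filter_superset_eq_sum_powersetCard_compl (Fintype.card_fin _) e']
  simp_rw [sdiff_compl, inf_eq_inter, inter_comm e]
  rw [sum_powersetCard_card_inter, hm, hqm,
    sum_choose_mul_choose_smul_localDecoderWeight hqr.le hmr]
  exact if_congr hm0 rfl rfl

/-- the local decoder. For `q > r ≥ 1` and any `r`-set `e` in `[q+r]`
there is an integer vector `Ψ` on `q`-subsets with `∂Ψ = N·1_e`, `N = (q)_r`,
and all entries bounded by `2^q · r!`. -/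
theorem stmt2 (q r : ℕ) (hqr : r < q) (hr : 1 ≤ r)
    (e : Finset (Fin (q + r))) (he : e.card = r) :
    ∃ Ψ : Finset (Fin (q + r)) → ℤ,
      (∀ e' : Finset (Fin (q + r)), e'.card = r →
        ∑ Q ∈ univ.filter (fun Q : Finset (Fin (q + r)) => Q.card = q ∧ e' ⊆ Q), Ψ Q
          = if e' = e then (q.descFactorial r : ℤ) else 0) ∧
      ∀ Q : Finset (Fin (q + r)), |Ψ Q| ≤ 2 ^ q * r.factorial :=
  stmt2_general q r hqr e he
end

section
/- With the setup of the local decoder: the unique rational solution Ψ to ∂Ψ = N·1_e (N = (q)_r) on K^r_{q+r} is given explicitly by Ψ_{Q'} = Σ_{i=0}^{t} (-1)^i binom(t,i) (q)_i (r-i)! where t = |e \ Q'|; in particular Ψ_{Q'} is an integer for every q-subset Q' of [q+r]. -/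
/-!
Summing `∂Ψ = N·1_e` over the `r`-sets containing a fixed `I` with `|I| ≤ r` counts every
`q`-set `Q ⊇ I` exactly `C(q - |I|, r - |I|)` times; since
`(q)_r = C(q - |I|, r - |I|) (q)_{|I|} (r - |I|)!`, this gives
`Σ_{Q ⊇ I} Ψ_Q = (q)_{|I|} (r - |I|)! · 1_{I ⊆ e}`. As `Ψ` lives on `q`-sets and `Q'ᶜ` has
`r` elements, Möbius inversion on the Boolean lattice gives
`Ψ_{Q'} = Σ_{S ⊆ Q'ᶜ} (-1)^{|S|} Σ_{Q ⊇ S} Ψ_Q`, in which only the subsets of `e \ Q'`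
contribute.
-/

theorem Nat.descFactorial_eq_choose_sub_mul {q r i : ℕ} (hir : i ≤ r) :
    q.descFactorial r = (q - i).choose (r - i) * (q.descFactorial i * (r - i).factorial) := by
  rw [← Nat.descFactorial_mul_descFactorial hir, Nat.descFactorial_eq_factorial_mul_choose]
  ring

namespace Finset

variable {α : Type*} [Fintype α] [DecidableEq α]

theorem card_filter_card_eq_subset_subset {I Q : Finset α} (hIQ : I ⊆ Q) {r : ℕ}
    (hr : #I ≤ r) :
    #{e : Finset α | #e = r ∧ I ⊆ e ∧ e ⊆ Q} = (#Q - #I).choose (r - #I) := by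
  rw [← card_sdiff_of_subset hIQ, ← card_powersetCard]
  refine card_nbij' (· \ I) (· ∪ I) ?_ ?_ ?_ ?_
  · intro e he
    simp only [mem_coe, mem_filter, mem_univ, true_and] at he
    rw [mem_coe, mem_powersetCard, card_sdiff_of_subset he.2.1, he.1]
    exact ⟨sdiff_subset_sdiff he.2.2 le_rfl, rfl⟩
  · intro S hS
    rw [mem_coe, mem_powersetCard] at hS
    simp only [mem_coe, mem_filter, mem_univ, true_and]
    refine ⟨?_, subset_union_right, union_subset (hS.1.trans sdiff_subset) hIQ⟩
    rw [card_union_of_disjoint (disjoint_sdiff_self_left.mono_left hS.1), hS.2]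
    omega
  · intro e he
    simp only [mem_coe, mem_filter, mem_univ, true_and] at he
    exact sdiff_union_of_subset he.2.1
  · intro S hS
    rw [mem_coe, mem_powersetCard] at hS
    exact union_sdiff_cancel_right (disjoint_sdiff_self_left.mono_left hS.1)

theorem sum_sum_supset_card_eq_choose_smul {M : Type*} [AddCommMonoid M] (f : Finset α → M)
    (I : Finset α) {q r : ℕ} (hr : #I ≤ r) :
    ∑ e with #e = r ∧ I ⊆ e, ∑ Q with #Q = q ∧ e ⊆ Q, f Q
      = (q - #I).choose (r - #I) • ∑ Q with #Q = q ∧ I ⊆ Q, f Q := by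
  rw [smul_sum, sum_comm' (t' := {Q | #Q = q ∧ I ⊆ Q})
    (s' := fun Q => {e | #e = r ∧ I ⊆ e ∧ e ⊆ Q})]
  · refine sum_congr rfl fun Q hQ => ?_
    simp only [mem_filter, mem_univ, true_and] at hQ
    rw [sum_const, card_filter_card_eq_subset_subset hQ.2 hr, hQ.1]
  · intro e Q
    simp only [mem_filter, mem_univ, true_and]
    constructor
    · rintro ⟨⟨he, hIe⟩, hQ, heQ⟩
      exact ⟨⟨he, hIe, heQ⟩, hQ, hIe.trans heQ⟩
    · rintro ⟨⟨he, hIe, heQ⟩, hQ, -⟩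
      exact ⟨⟨he, hIe⟩, hQ, heQ⟩

theorem sum_powerset_compl_neg_one_pow_mul_sum_supset {R : Type*} [CommRing R]
    (f : Finset α → R) (T : Finset α) :
    ∑ S ∈ Tᶜ.powerset, (-1) ^ #S * ∑ Q with S ⊆ Q, f Q = ∑ Q with Q ⊆ T, f Q := by
  simp_rw [mul_sum, sum_filter]
  rw [sum_comm]
  refine sum_congr rfl fun Q _ => ?_
  have hfilter : {S ∈ Tᶜ.powerset | S ⊆ Q} = (Tᶜ ∩ Q).powerset := by
    ext S; simp only [mem_filter, mem_powerset, subset_inter_iff]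
  have hempty : Tᶜ ∩ Q = ∅ ↔ Q ⊆ T := by
    rw [← disjoint_iff_inter_eq_empty, disjoint_compl_left_iff]
  have hsign : ∑ S ∈ (Tᶜ ∩ Q).powerset, (-1 : R) ^ #S = if Q ⊆ T then 1 else 0 := by
    have h := congrArg (Int.cast : ℤ → R) (sum_powerset_neg_one_pow_card (x := Tᶜ ∩ Q))
    push_cast at h
    simpa only [hempty] using h
  rw [← sum_filter, hfilter, ← sum_mul, hsign, ite_zero_mul, one_mul]

theorem eq_sum_powerset_compl_of_card_ne {R : Type*} [CommRing R] {f : Finset α → R} {k : ℕ}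
    (hf : ∀ Q, #Q ≠ k → f Q = 0) {T : Finset α} (hT : #T = k) :
    f T = ∑ S ∈ Tᶜ.powerset, (-1) ^ #S * ∑ Q with #Q = k ∧ S ⊆ Q, f Q := by
  have hdrop (S : Finset α) : ∑ Q with #Q = k ∧ S ⊆ Q, f Q = ∑ Q with S ⊆ Q, f Q := by
    rw [sum_filter, sum_filter]
    refine sum_congr rfl fun Q _ => ?_
    by_cases hQ : #Q = k <;> simp [hQ, hf]
  simp_rw [hdrop, sum_powerset_compl_neg_one_pow_mul_sum_supset]
  refine (sum_eq_single_of_mem T (by simp) fun Q hQ hne => hf Q ?_).symm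
  rw [← hT]
  exact (card_lt_card (ssubset_of_subset_of_ne (mem_filter.1 hQ).2 hne)).ne

theorem sum_card_eq_supset_eq_of_boundary_eq {K : Type*} [Field K] [CharZero K] {q r : ℕ}
    (hrq : r ≤ q) {e : Finset α} (he : #e = r) {Ψ : Finset α → K}
    (hΨ : ∀ e' : Finset α, #e' = r →
      ∑ Q with #Q = q ∧ e' ⊆ Q, Ψ Q = if e' = e then (q.descFactorial r : K) else 0)
    {I : Finset α} (hI : #I ≤ r) :
    ∑ Q with #Q = q ∧ I ⊆ Q, Ψ Q
      = if I ⊆ e then (q.descFactorial #I * (r - #I).factorial : K) else 0 := by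
  have hchoose : ((q - #I).choose (r - #I) : K) ≠ 0 := by
    exact_mod_cast (Nat.choose_pos (by omega)).ne'
  apply mul_left_cancel₀ hchoose
  rw [← nsmul_eq_mul, ← sum_sum_supset_card_eq_choose_smul Ψ I hI,
    sum_congr rfl fun e' he' => hΨ e' (mem_filter.1 he').2.1, sum_ite_eq']
  simp only [mem_filter, mem_univ, true_and, he, mul_ite, mul_zero]
  rw [Nat.descFactorial_eq_choose_sub_mul hI]
  push_cast
  rfl

theorem sum_powerset_ite_subset {β M : Type*} [DecidableEq β] [AddCommMonoid M] (g : ℕ → M)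
    (T e : Finset β) :
    ∑ S ∈ T.powerset, (if S ⊆ e then g #S else 0)
      = ∑ m ∈ range (#(T ∩ e) + 1), (#(T ∩ e)).choose m • g m := by
  have hfilter : {S ∈ T.powerset | S ⊆ e} = (T ∩ e).powerset := by
    ext S; simp only [mem_filter, mem_powerset, subset_inter_iff]
  rw [← sum_filter, hfilter, sum_powerset_apply_card]

theorem sum_range_choose_smul_of_le {M : Type*} [AddCommMonoid M] (g : ℕ → M) {t n : ℕ}
    (htn : t ≤ n) :
    ∑ m ∈ range (t + 1), t.choose m • g m = ∑ m ∈ range (n + 1), t.choose m • g m := by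
  refine sum_subset (range_subset_range.2 (by omega)) fun m _ hm => ?_
  rw [Nat.choose_eq_zero_of_lt (by simpa using hm), zero_smul]

end Finset

open Finset

theorem stmt3_general (q r : ℕ) (hqr : r < q)
    (e : Finset (Fin (q + r))) (he : e.card = r)
    (Ψ : Finset (Fin (q + r)) → ℚ)
    (hsupp : ∀ Q : Finset (Fin (q + r)), Q.card ≠ q → Ψ Q = 0)
    (hΨ : ∀ e' : Finset (Fin (q + r)), e'.card = r →
      ∑ Q ∈ univ.filter (fun Q : Finset (Fin (q + r)) => Q.card = q ∧ e' ⊆ Q), Ψ Q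
        = if e' = e then (q.descFactorial r : ℚ) else 0) :
    ∀ Q' : Finset (Fin (q + r)), Q'.card = q →
      Ψ Q' = ((∑ i ∈ Finset.range (r + 1),
        (-1 : ℤ) ^ i * ((e \ Q').card.choose i : ℤ) * (q.descFactorial i : ℤ)
          * ((r - i).factorial : ℤ) : ℤ) : ℚ) := by
  intro Q' hQ'
  have hcompl : #Q'ᶜ = r := by rw [card_compl, hQ', Fintype.card_fin]; omega
  have hsdiff : #(e \ Q') ≤ r := (card_le_card sdiff_subset).trans he.le
  rw [eq_sum_powerset_compl_of_card_ne hsupp hQ']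
  rw [sum_congr rfl fun S hS => by
    rw [sum_card_eq_supset_eq_of_boundary_eq hqr.le he hΨ
      ((card_le_card (mem_powerset.1 hS)).trans hcompl.le), mul_ite, mul_zero]]
  rw [sum_powerset_ite_subset
      (fun i => (-1 : ℚ) ^ i * ((q.descFactorial i : ℚ) * (r - i).factorial)),
    inter_comm, ← sdiff_eq_inter_compl, sum_range_choose_smul_of_le _ hsdiff]
  push_cast
  refine sum_congr rfl fun i _ => ?_
  rw [nsmul_eq_mul]
  ring

/-- the unique rational solution `Ψ` (supported on `q`-subsets of `[q+r]`)
of `∂Ψ = N·1_e` with `N = (q)_r` is given by the explicit integral formula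
`Ψ_{Q'} = ∑_{i=0}^{t} (-1)^i C(t,i) (q)_i (r-i)!` with `t = |e \ Q'|`;
in particular every `Ψ_{Q'}` is an integer. -/
theorem stmt3 (q r : ℕ) (hqr : r < q) (hr : 1 ≤ r)
    (e : Finset (Fin (q + r))) (he : e.card = r)
    (Ψ : Finset (Fin (q + r)) → ℚ)
    (hsupp : ∀ Q : Finset (Fin (q + r)), Q.card ≠ q → Ψ Q = 0)
    (hΨ : ∀ e' : Finset (Fin (q + r)), e'.card = r →
      ∑ Q ∈ univ.filter (fun Q : Finset (Fin (q + r)) => Q.card = q ∧ e' ⊆ Q), Ψ Q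
        = if e' = e then (q.descFactorial r : ℚ) else 0) :
    ∀ Q' : Finset (Fin (q + r)), Q'.card = q →
      Ψ Q' = ((∑ i ∈ Finset.range (r + 1),
        (-1 : ℤ) ^ i * ((e \ Q').card.choose i : ℤ) * (q.descFactorial i : ℤ)
          * ((r - i).factorial : ℤ) : ℤ) : ℚ) :=
  stmt3_general q r hqr e he Ψ hsupp hΨ
end

section
/- Let Ψ ∈ Z^{binom([q+r],q)} satisfy ∂Ψ = N·1_e on K^r_{q+r} with N = (q)_r. Then for every subset I ⊆ [q+r] with |I| = i ≤ r, one has Σ_{Q ⊇ I} Ψ_Q = (q)_i (r-i)!·1_{I ⊆ e}. -/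
open Finset

lemma count_between {n : ℕ} (I Q : Finset (Fin n)) (hIQ : I ⊆ Q) (rr : ℕ)
    (hir : I.card ≤ rr) :
    (univ.filter (fun e' : Finset (Fin n) => e'.card = rr ∧ I ⊆ e' ∧ e' ⊆ Q)).card
      = (Q.card - I.card).choose (rr - I.card) := by
  rw [← Finset.card_sdiff_of_subset hIQ, ← Finset.card_powersetCard (rr - I.card) (Q \ I)]
  apply Finset.card_bij' (fun e' _ => e' \ I) (fun t _ => t ∪ I)
  · intro e' he'
    simp only [mem_filter, mem_univ, true_and] at he'
    simp only [Finset.mem_powersetCard]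
    exact ⟨sdiff_subset_sdiff he'.2.2 (Finset.Subset.refl I),
      by rw [Finset.card_sdiff_of_subset he'.2.1, he'.1]⟩
  · intro t ht
    simp only [Finset.mem_powersetCard] at ht
    simp only [mem_filter, mem_univ, true_and]
    have hdisj : Disjoint t I := Finset.disjoint_of_subset_left ht.1 (Finset.sdiff_disjoint)
    refine ⟨?_, Finset.subset_union_right, ?_⟩
    · rw [Finset.card_union_of_disjoint hdisj, ht.2]
      omega
    · exact Finset.union_subset (ht.1.trans Finset.sdiff_subset) hIQ
  · intro e' he'
    simp only [mem_filter, mem_univ, true_and] at he'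
    exact Finset.sdiff_union_of_subset he'.2.1
  · intro t ht
    simp only [Finset.mem_powersetCard] at ht
    exact Finset.union_sdiff_cancel_right
      (Finset.disjoint_of_subset_left ht.1 Finset.sdiff_disjoint)

/-- if `Ψ ∈ ℤ^{C([q+r],q)}` satisfies `∂Ψ = N·1_e` with `N = (q)_r`,
then for every `I ⊆ [q+r]` with `|I| = i ≤ r` we have
`∑_{Q ⊇ I} Ψ_Q = (q)_i (r-i)! · 1_{I ⊆ e}`. -/
theorem stmt4 (q r : ℕ) (hqr : r < q) (hr : 1 ≤ r)
    (e : Finset (Fin (q + r))) (he : e.card = r)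
    (Ψ : Finset (Fin (q + r)) → ℤ)
    (hΨ : ∀ e' : Finset (Fin (q + r)), e'.card = r →
      ∑ Q ∈ univ.filter (fun Q : Finset (Fin (q + r)) => Q.card = q ∧ e' ⊆ Q), Ψ Q
        = if e' = e then (q.descFactorial r : ℤ) else 0)
    (I : Finset (Fin (q + r))) (hI : I.card ≤ r) :
    ∑ Q ∈ univ.filter (fun Q : Finset (Fin (q + r)) => Q.card = q ∧ I ⊆ Q), Ψ Q
      = if I ⊆ e then (q.descFactorial I.card : ℤ) * ((r - I.card).factorial : ℤ) else 0 := by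
  set i := I.card with hi
  -- sum hΨ over all r-subsets e' containing I
  have hsum : ∑ e' ∈ univ.filter (fun e' : Finset (Fin (q + r)) => e'.card = r ∧ I ⊆ e'),
      (∑ Q ∈ univ.filter (fun Q : Finset (Fin (q + r)) => Q.card = q ∧ e' ⊆ Q), Ψ Q)
      = if I ⊆ e then (q.descFactorial r : ℤ) else 0 := by
    rw [Finset.sum_congr rfl (fun e' he' => by
      simp only [mem_filter, mem_univ, true_and] at he'
      exact hΨ e' he'.1)]
    rw [Finset.sum_ite_eq' _ e (fun _ => (q.descFactorial r : ℤ))]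
    by_cases h : I ⊆ e <;> simp [h, he]
  -- swap sums
  have hswap : ∑ e' ∈ univ.filter (fun e' : Finset (Fin (q + r)) => e'.card = r ∧ I ⊆ e'),
      (∑ Q ∈ univ.filter (fun Q : Finset (Fin (q + r)) => Q.card = q ∧ e' ⊆ Q), Ψ Q)
      = ((q - i).choose (r - i) : ℤ) *
        ∑ Q ∈ univ.filter (fun Q : Finset (Fin (q + r)) => Q.card = q ∧ I ⊆ Q), Ψ Q := by
    simp only [Finset.sum_filter]
    have pull : ∀ (c : Prop) [Decidable c] (f : Finset (Fin (q + r)) → ℤ),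
        (if c then ∑ x : Finset (Fin (q + r)), f x else 0)
          = ∑ x : Finset (Fin (q + r)), if c then f x else 0 := by
      intro c _ f; split <;> simp
    simp_rw [pull]
    rw [Finset.sum_comm]
    rw [Finset.mul_sum]
    refine Finset.sum_congr rfl fun Q _ => ?_
    by_cases hQ : Q.card = q ∧ I ⊆ Q
    · have : ∀ e' : Finset (Fin (q + r)),
        ((if e'.card = r ∧ I ⊆ e' then if Q.card = q ∧ e' ⊆ Q then Ψ Q else 0 else 0)
          = if e'.card = r ∧ I ⊆ e' ∧ e' ⊆ Q then Ψ Q else 0) := by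
        intro e'
        by_cases h2 : e'.card = r ∧ I ⊆ e'
        · by_cases h3 : e' ⊆ Q <;> simp [h2.1, h2.2, h3, hQ.1]
        · simp only [h2, if_false]
          rw [if_neg (fun h => h2 ⟨h.1, h.2.1⟩)]
      simp_rw [this]
      rw [← Finset.sum_filter, Finset.sum_const,
        count_between I Q hQ.2 r (by omega), hQ.1]
      rw [hi, if_pos ⟨rfl, hQ.2⟩, nsmul_eq_mul, mul_comm]
    · have : ∀ e' : Finset (Fin (q + r)),
        ((if e'.card = r ∧ I ⊆ e' then if Q.card = q ∧ e' ⊆ Q then Ψ Q else 0 else 0) = 0) := by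
        intro e'
        by_cases h2 : e'.card = r ∧ I ⊆ e'
        · have : ¬ (Q.card = q ∧ e' ⊆ Q) := by
            intro h3; exact hQ ⟨h3.1, h2.2.trans h3.2⟩
          simp [h2, this]
        · simp [h2]
      simp_rw [this]
      simp [hQ]
  rw [hswap] at hsum
  -- cancel the binomial coefficient
  have hchoose : (q - i).choose (r - i) * (q.descFactorial i * (r - i).factorial)
      = q.descFactorial r := by
    rw [show (q - i).choose (r - i) * (q.descFactorial i * (r - i).factorial)
      = ((r - i).factorial * (q - i).choose (r - i)) * q.descFactorial i by ring,
      ← Nat.descFactorial_eq_factorial_mul_choose,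
      Nat.descFactorial_mul_descFactorial hI]
  have hpos : 0 < (q - i).choose (r - i) :=
    Nat.choose_pos (by omega)
  have := hsum
  by_cases h : I ⊆ e <;> simp only [h, if_true, if_false] at this ⊢
  · have h2 : ((q - i).choose (r - i) : ℤ) *
      (∑ Q ∈ univ.filter (fun Q : Finset (Fin (q + r)) => Q.card = q ∧ I ⊆ Q), Ψ Q)
      = ((q - i).choose (r - i) : ℤ) *
        ((q.descFactorial i : ℤ) * ((r - i).factorial : ℤ)) := by
      rw [this, ← hchoose]; push_cast; ring
    exact mul_left_cancel₀ (by exact_mod_cast hpos.ne') h2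
  · exact mul_left_cancel₀ (a := ((q - i).choose (r - i) : ℤ))
      (by exact_mod_cast hpos.ne') (by rw [this, mul_zero])
end

section
/- Conversely to the necessary divisibility conditions: for n = q+r, if J ∈ Z^{binom([q+r],r)} satisfies binom(q-i, r-i) | Σ{J_e : I ⊆ e} for all 0 ≤ i ≤ r and all i-subsets I of [q+r], then there exists Ψ ∈ Z^{binom([q+r],q)} with ∂Ψ = J. -/
open Finset

/-!
Since `n = q + r`, the `q`-sets containing an `r`-set `e` are the complements of the `r`-subsets
of `eᶜ`, a `q`-set. Put `S I = ∑{J e' : I ⊆ e'}` and `T I = S I / C(q - |I|, r - |I|)`, an integer by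
hypothesis, and `Ψ Q = ∑_{I ⊆ Qᶜ} (-1)^|I| T I`. Every `I ⊆ eᶜ` lies in exactly `C(q - |I|, r - |I|)`
of the `r`-subsets of `eᶜ`, so `(∂Ψ) e = ∑_{I ⊆ eᶜ} (-1)^|I| S I`, and by inclusion–exclusion this
is the sum of `J e'` over the `r`-sets `e'` disjoint from `eᶜ`, i.e. `J e`.
-/

namespace Finset

variable {α : Type*} [DecidableEq α]

theorem card_filter_superset_powersetCard {I s : Finset α} {k : ℕ} (hIs : I ⊆ s)
    (hIk : #I ≤ k) : #{f ∈ s.powersetCard k | I ⊆ f} = (#s - #I).choose (k - #I) := by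
  rw [← card_sdiff_of_subset hIs, ← card_powersetCard]
  refine card_nbij' (· \ I) (· ∪ I) ?_ ?_ ?_ ?_
  · intro f hf
    simp only [mem_coe, mem_filter, mem_powersetCard] at hf
    obtain ⟨⟨hfs, hfk⟩, hIf⟩ := hf
    simp only [mem_coe, mem_powersetCard]
    exact ⟨sdiff_subset_sdiff hfs le_rfl, by rw [card_sdiff_of_subset hIf, hfk]⟩
  · intro A hA
    simp only [mem_coe, mem_powersetCard] at hA
    obtain ⟨hAs, hAk⟩ := hA
    have hAI : Disjoint A I := disjoint_of_subset_left hAs sdiff_disjoint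
    simp only [mem_coe, mem_filter, mem_powersetCard]
    refine ⟨⟨union_subset (hAs.trans sdiff_subset) hIs, ?_⟩, subset_union_right⟩
    rw [card_union_of_disjoint hAI, hAk]
    omega
  · intro f hf
    exact sdiff_union_of_subset (mem_filter.1 hf).2
  · intro A hA
    simp only [mem_coe, mem_powersetCard] at hA
    exact union_sdiff_cancel_right (disjoint_of_subset_left hA.1 sdiff_disjoint)

theorem card_filter_superset_powersetCard_of_lt {I s : Finset α} {k : ℕ} (hkI : k < #I) :
    #{f ∈ s.powersetCard k | I ⊆ f} = 0 :=
  card_eq_zero.2 <| filter_false_of_mem fun f hf hIf => by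
    have := card_le_card hIf
    rw [(mem_powersetCard.1 hf).2] at this
    omega

theorem sum_sum_powerset_eq_sum_card_filter_superset_smul {M : Type*} [AddCommMonoid M]
    {G : Finset (Finset α)} {s : Finset α} (hG : ∀ f ∈ G, f ⊆ s) (g : Finset α → M) :
    ∑ f ∈ G, ∑ I ∈ f.powerset, g I = ∑ I ∈ s.powerset, #{f ∈ G | I ⊆ f} • g I := by
  rw [sum_comm' (t' := s.powerset) (s' := fun I => {f ∈ G | I ⊆ f})]
  · simp only [sum_const]
  · intro f I
    simp only [mem_powerset, mem_filter]
    exact ⟨fun ⟨hf, hIf⟩ => ⟨⟨hf, hIf⟩, hIf.trans (hG f hf)⟩, fun ⟨⟨hf, hIf⟩, _⟩ => ⟨hf, hIf⟩⟩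

theorem sum_powerset_neg_one_pow_zsmul_sum_filter_superset {M : Type*} [AddCommGroup M]
    (t : Finset α) (F : Finset (Finset α)) (J : Finset α → M) :
    ∑ I ∈ t.powerset, (-1 : ℤ) ^ #I • ∑ e ∈ F with I ⊆ e, J e =
      ∑ e ∈ F with Disjoint e t, J e := by
  simp_rw [smul_sum]
  rw [sum_comm' (t' := F) (s' := fun e => (e ∩ t).powerset)]
  · rw [sum_filter]
    refine sum_congr rfl fun e _ => ?_
    rw [← sum_smul, sum_powerset_neg_one_pow_card]
    by_cases h : e ∩ t = ∅ <;> simp [h, disjoint_iff_inter_eq_empty]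
  · intro I e
    simp only [mem_powerset, mem_filter, subset_inter_iff]
    tauto

theorem sum_filter_card_superset_eq_sum_powersetCard_compl [Fintype α] {M : Type*}
    [AddCommMonoid M] {q r : ℕ} (hα : Fintype.card α = q + r) (e : Finset α)
    (φ : Finset α → M) :
    ∑ Q ∈ univ with #Q = q ∧ e ⊆ Q, φ Q = ∑ f ∈ eᶜ.powersetCard r, φ fᶜ := by
  refine sum_nbij' compl compl ?_ ?_ (fun _ _ => compl_compl _) (fun _ _ => compl_compl _)
    (fun _ _ => by rw [compl_compl])
  · intro Q hQ
    rw [mem_filter] at hQ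
    rw [mem_powersetCard, compl_subset_compl, card_compl, hα, hQ.2.1]
    exact ⟨hQ.2.2, by omega⟩
  · intro f hf
    rw [mem_powersetCard] at hf
    rw [mem_filter, card_compl, hα, hf.2]
    exact ⟨mem_univ _, by omega, subset_compl_comm.1 hf.1⟩

theorem filter_card_eq_and_disjoint_compl_eq_singleton [Fintype α] {e : Finset α} {k : ℕ}
    (he : #e = k) : {e' ∈ (univ : Finset (Finset α)) | #e' = k ∧ Disjoint e' eᶜ} = {e} := by
  ext e'
  rw [mem_filter, mem_singleton, disjoint_compl_right_iff]
  refine ⟨fun ⟨_, he', hsub⟩ => eq_of_subset_of_card_le hsub (by rw [he, he']), ?_⟩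
  rintro rfl
  exact ⟨mem_univ _, he, le_rfl⟩

end Finset

theorem stmt6_general (q r : ℕ)
    (J : Finset (Fin (q + r)) → ℤ)
    (hdiv : ∀ I : Finset (Fin (q + r)), I.card ≤ r →
      ((q - I.card).choose (r - I.card) : ℤ) ∣
        ∑ e ∈ univ.filter (fun e : Finset (Fin (q + r)) => e.card = r ∧ I ⊆ e), J e) :
    ∃ Ψ : Finset (Fin (q + r)) → ℤ, ∀ e : Finset (Fin (q + r)), e.card = r →
      J e = ∑ Q ∈ univ.filter (fun Q : Finset (Fin (q + r)) => Q.card = q ∧ e ⊆ Q), Ψ Q := by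
  set S : Finset (Fin (q + r)) → ℤ := fun I => ∑ e ∈ univ with #e = r ∧ I ⊆ e, J e
  refine ⟨fun Q => ∑ I ∈ Qᶜ.powerset, (-1) ^ #I * (S I / ((q - #I).choose (r - #I) : ℤ)),
    fun e he => ?_⟩
  have hec : #eᶜ = q := by rw [card_compl, Fintype.card_fin, he, Nat.add_sub_cancel]
  have hcount : ∀ I ∈ eᶜ.powerset, #{f ∈ eᶜ.powersetCard r | I ⊆ f} •
      ((-1) ^ #I * (S I / ((q - #I).choose (r - #I) : ℤ))) = (-1 : ℤ) ^ #I • S I := by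
    intro I hI
    by_cases hIr : #I ≤ r
    · rw [card_filter_superset_powersetCard (mem_powerset.1 hI) hIr, hec, nsmul_eq_mul,
        smul_eq_mul, mul_left_comm, Int.mul_ediv_cancel' (hdiv I hIr)]
    · have hS : S I = 0 := sum_eq_zero fun e' he' => by
        obtain ⟨-, he'r, hIe'⟩ := mem_filter.1 he'
        have := card_le_card hIe'
        omega
      rw [card_filter_superset_powersetCard_of_lt (by omega), hS, zero_smul, smul_zero]
  rw [sum_filter_card_superset_eq_sum_powersetCard_compl (Fintype.card_fin _) e]
  simp_rw [compl_compl]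
  rw [sum_sum_powerset_eq_sum_card_filter_superset_smul fun f hf => (mem_powersetCard.1 hf).1,
    sum_congr rfl hcount]
  simp only [S, ← filter_filter]
  rw [sum_powerset_neg_one_pow_zsmul_sum_filter_superset]
  simp only [filter_filter, filter_card_eq_and_disjoint_compl_eq_singleton he, sum_singleton]

/-- converse divisibility at `n = q+r`: if `J ∈ ℤ^{C([q+r],r)}`
satisfies `C(q-i,r-i) ∣ ∑{J_e : I ⊆ e}` for all `0 ≤ i ≤ r` and all `i`-subsets `I`,
then `J = ∂Ψ` for some integer vector `Ψ` on `q`-subsets of `[q+r]`. -/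
theorem stmt6 (q r : ℕ) (hqr : r < q) (hr : 1 ≤ r)
    (J : Finset (Fin (q + r)) → ℤ)
    (hdiv : ∀ I : Finset (Fin (q + r)), I.card ≤ r →
      ((q - I.card).choose (r - I.card) : ℤ) ∣
        ∑ e ∈ univ.filter (fun e : Finset (Fin (q + r)) => e.card = r ∧ I ⊆ e), J e) :
    ∃ Ψ : Finset (Fin (q + r)) → ℤ, ∀ e : Finset (Fin (q + r)), e.card = r →
      J e = ∑ Q ∈ univ.filter (fun Q : Finset (Fin (q + r)) => Q.card = q ∧ e ⊆ Q), Ψ Q :=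
  stmt6_general q r J hdiv
end

section
/- For n ≥ q+r: an integer vector J ∈ Z^{binom([n],r)} is K^r_q-divisible if and only if binom(q-i, r-i) divides Σ{J_e : I ⊆ e, |e| = r} for all 0 ≤ i ≤ r and all i-subsets I of [n]. -/
open Finset
set_option linter.unusedSectionVars false
set_option linter.unusedVariables false

section Aux

variable {V : Type*} [DecidableEq V] [Fintype V]


/-- The expansion of `(x_{a₁} - x_{b₁})⋯(x_{aₘ} - x_{bₘ})` as a vector on finsets. -/
def podVec : List (V × V) → Finset V → ℤ
  | [], e => if e = ∅ then 1 else 0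
  | (p :: L), e => (if p.1 ∈ e then podVec L (e.erase p.1) else 0)
      - (if p.2 ∈ e then podVec L (e.erase p.2) else 0)

def podVerts : List (V × V) → Finset V
  | [] => ∅
  | p :: L => insert p.1 (insert p.2 (podVerts L))

def GoodPod : List (V × V) → Prop
  | [] => True
  | p :: L => p.1 ≠ p.2 ∧ p.1 ∉ podVerts L ∧ p.2 ∉ podVerts L ∧ GoodPod L

lemma podVec_support : ∀ (L : List (V × V)) (e : Finset V), podVec L e ≠ 0 →
    e.card = L.length ∧ e ⊆ podVerts L := by
  intro L
  induction L with
  | nil =>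
    intro e he
    simp only [podVec] at he
    split at he
    · subst ‹e = ∅›; simp [podVerts]
    · exact absurd rfl he
  | cons p L ih =>
    intro e he
    simp only [podVec] at he
    have h : (if p.1 ∈ e then podVec L (e.erase p.1) else 0) ≠ 0 ∨
        (if p.2 ∈ e then podVec L (e.erase p.2) else 0) ≠ 0 := by
      by_contra h
      push_neg at h
      rw [h.1, h.2] at he
      exact he (sub_self 0)
    rcases h with h | h
    · have hm : p.1 ∈ e := by by_contra hm; rw [if_neg hm] at h; exact h rfl
      rw [if_pos hm] at h
      obtain ⟨hc, hs⟩ := ih _ h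
      constructor
      · rw [Finset.card_erase_of_mem hm] at hc
        have : 1 ≤ e.card := Finset.card_pos.2 ⟨p.1, hm⟩
        simp only [List.length_cons]
        omega
      · intro x hx
        by_cases hxp : x = p.1
        · subst hxp; simp [podVerts]
        · have := hs (Finset.mem_erase.2 ⟨hxp, hx⟩)
          simp [podVerts, Finset.mem_insert, this]
    · have hm : p.2 ∈ e := by by_contra hm; rw [if_neg hm] at h; exact h rfl
      rw [if_pos hm] at h
      obtain ⟨hc, hs⟩ := ih _ h
      constructor
      · rw [Finset.card_erase_of_mem hm] at hc
        have : 1 ≤ e.card := Finset.card_pos.2 ⟨p.2, hm⟩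
        simp only [List.length_cons]
        omega
      · intro x hx
        by_cases hxp : x = p.2
        · subst hxp; simp [podVerts]
        · have := hs (Finset.mem_erase.2 ⟨hxp, hx⟩)
          simp [podVerts, Finset.mem_insert, this]

lemma podVec_eq_zero_of_card (L : List (V × V)) (e : Finset V) (h : e.card ≠ L.length) :
    podVec L e = 0 := by
  by_contra hne
  exact h (podVec_support L e hne).1

lemma podVec_eq_zero_of_mem (L : List (V × V)) (e : Finset V) {x : V}
    (hx : x ∈ e) (hxL : x ∉ podVerts L) : podVec L e = 0 := by
  by_contra hne
  exact hxL ((podVec_support L e hne).2 hx)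

lemma podVerts_card_le (L : List (V × V)) : (podVerts L).card ≤ 2 * L.length := by
  induction L with
  | nil => simp [podVerts]
  | cons p L ih =>
    simp only [podVerts, List.length_cons]
    calc (insert p.1 (insert p.2 (podVerts L))).card
        ≤ (insert p.2 (podVerts L)).card + 1 := Finset.card_insert_le _ _
      _ ≤ (podVerts L).card + 1 + 1 := by
          have := Finset.card_insert_le p.2 (podVerts L); omega
      _ ≤ 2 * (L.length + 1) := by omega

lemma podVec_cons_mem_fst {a b : V} (L : List (V × V)) (e : Finset V)
    (hG : GoodPod ((a, b) :: L)) (ha : a ∈ e) :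
    podVec ((a, b) :: L) e = podVec L (e.erase a) := by
  obtain ⟨hab, haL, hbL, hL⟩ := hG
  simp only [podVec, if_pos ha]
  have h2 : (if b ∈ e then podVec L (e.erase b) else 0) = 0 := by
    split
    · exact podVec_eq_zero_of_mem L _ (Finset.mem_erase.2 ⟨hab, ha⟩) haL
    · rfl
  rw [h2, sub_zero]

lemma podVec_cons_not_mem {a b : V} (L : List (V × V)) (e : Finset V) (ha : a ∉ e) :
    podVec ((a, b) :: L) e
      = - (if b ∈ e then podVec L (e.erase b) else 0) := by
  simp only [podVec, if_neg ha, zero_sub]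
lemma podsum : ∀ (L : List (V × V)), GoodPod L → ∀ f : Finset V, f.card ≤ L.length →
    ∑ X ∈ univ.filter (fun X => X.card = L.length ∧ f ⊆ X), podVec L X
      = if f.card = L.length then podVec L f else 0 := by
  intro L
  induction L with
  | nil =>
    intro _ f hf
    have hfe : f = ∅ := Finset.card_eq_zero.1 (Nat.le_zero.1 hf)
    subst hfe
    have hset : univ.filter
        (fun X : Finset V => X.card = ([] : List (V × V)).length ∧ (∅ : Finset V) ⊆ X)
        = {(∅ : Finset V)} := by
      ext X
      simp [Finset.card_eq_zero, List.length_nil]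
    rw [hset]
    simp [podVec]
  | cons p L ih =>
    obtain ⟨a, b⟩ := p
    intro hG f hf
    obtain ⟨hab, haL, hbL, hLG⟩ := hG
    simp only [List.length_cons] at hf ⊢
    have key : ∀ c : V, c ∉ podVerts L →
        ∑ X ∈ univ.filter (fun X => (X.card = L.length + 1 ∧ f ⊆ X) ∧ c ∈ X),
            podVec L (X.erase c)
          = if (f.erase c).card = L.length then podVec L (f.erase c) else 0 := by
      intro c hc
      by_cases hbad : f.card = L.length + 1 ∧ c ∉ f
      · have hemp : univ.filter (fun X => (X.card = L.length + 1 ∧ f ⊆ X) ∧ c ∈ X) = ∅ := by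
          ext X
          simp only [Finset.mem_filter, Finset.mem_univ, true_and, Finset.notMem_empty,
            iff_false, not_and]
          rintro ⟨hX1, hX2⟩ hX3
          have hfx : f = X := Finset.eq_of_subset_of_card_le hX2 (by omega)
          rw [← hfx] at hX3
          exact hbad.2 hX3
        rw [hemp, Finset.sum_empty, Finset.erase_eq_of_notMem hbad.2, if_neg (by omega)]
      · have hfc : (f.erase c).card ≤ L.length := by
          by_cases hcf : c ∈ f
          · rw [Finset.card_erase_of_mem hcf]; omega
          · rw [Finset.erase_eq_of_notMem hcf]
            rcases Nat.lt_or_ge f.card (L.length + 1) with h | h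
            · omega
            · exact absurd ⟨by omega, hcf⟩ hbad
        rw [← ih hLG (f.erase c) hfc]
        have hstep : ∑ X ∈ univ.filter (fun X => (X.card = L.length + 1 ∧ f ⊆ X) ∧ c ∈ X),
              podVec L (X.erase c)
            = ∑ Y ∈ univ.filter (fun Y => (Y.card = L.length ∧ f.erase c ⊆ Y) ∧ c ∉ Y),
              podVec L Y := by
          refine Finset.sum_nbij' (fun X => X.erase c) (fun Y => insert c Y) ?_ ?_ ?_ ?_ ?_
          · intro X hX
            simp only [Finset.mem_filter, Finset.mem_univ, true_and] at hX ⊢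
            obtain ⟨⟨h1, h2⟩, h3⟩ := hX
            exact ⟨⟨by rw [Finset.card_erase_of_mem h3]; omega,
              Finset.erase_subset_erase c h2⟩, Finset.notMem_erase c X⟩
          · intro Y hY
            simp only [Finset.mem_filter, Finset.mem_univ, true_and] at hY ⊢
            obtain ⟨⟨h1, h2⟩, h3⟩ := hY
            refine ⟨⟨by rw [Finset.card_insert_of_notMem h3]; omega, ?_⟩,
              Finset.mem_insert_self c Y⟩
            intro x hx
            by_cases hxc : x = c
            · rw [hxc]; exact Finset.mem_insert_self c Y
            · exact Finset.mem_insert_of_mem (h2 (Finset.mem_erase.2 ⟨hxc, hx⟩))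
          · intro X hX
            simp only [Finset.mem_filter, Finset.mem_univ, true_and] at hX
            exact Finset.insert_erase hX.2
          · intro Y hY
            simp only [Finset.mem_filter, Finset.mem_univ, true_and] at hY
            exact Finset.erase_insert hY.2
          · intro X hX; rfl
        rw [hstep]
        refine Finset.sum_subset ?_ ?_
        · intro Y hY
          simp only [Finset.mem_filter, Finset.mem_univ, true_and] at hY ⊢
          exact hY.1
        · intro Y hY hY2
          simp only [Finset.mem_filter, Finset.mem_univ, true_and] at hY hY2
          have hcY : c ∈ Y := by
            by_contra h
            exact hY2 ⟨hY, h⟩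
          exact podVec_eq_zero_of_mem L Y hcY hc
    have hsplit : ∑ X ∈ univ.filter (fun X => X.card = L.length + 1 ∧ f ⊆ X),
          podVec ((a, b) :: L) X
        = (∑ X ∈ univ.filter (fun X => (X.card = L.length + 1 ∧ f ⊆ X) ∧ a ∈ X),
            podVec L (X.erase a))
          - (∑ X ∈ univ.filter (fun X => (X.card = L.length + 1 ∧ f ⊆ X) ∧ b ∈ X),
            podVec L (X.erase b)) := by
      simp only [podVec]
      rw [Finset.sum_sub_distrib]
      congr 1
      · conv_rhs => rw [← Finset.filter_filter, Finset.sum_filter]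
      · conv_rhs => rw [← Finset.filter_filter, Finset.sum_filter]
    have hLlen : podVec ((a, b) :: L) f
        = (if a ∈ f then podVec L (f.erase a) else 0)
          - (if b ∈ f then podVec L (f.erase b) else 0) := rfl
    rw [hsplit, key a haL, key b hbL]
    by_cases hfm : f.card = L.length + 1
    · rw [if_pos hfm, hLlen]
      congr 1
      · by_cases hfa : a ∈ f
        · rw [if_pos hfa, if_pos (by rw [Finset.card_erase_of_mem hfa]; omega)]
        · rw [if_neg hfa, if_neg (by rw [Finset.erase_eq_of_notMem hfa]; omega)]
      · by_cases hfb : b ∈ f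
        · rw [if_pos hfb, if_pos (by rw [Finset.card_erase_of_mem hfb]; omega)]
        · rw [if_neg hfb, if_neg (by rw [Finset.erase_eq_of_notMem hfb]; omega)]
    · rw [if_neg hfm]
      by_cases hflt : f.card = L.length
      · by_cases hfa : a ∈ f <;> by_cases hfb : b ∈ f
        · have h1 : 1 ≤ f.card := Finset.card_pos.2 ⟨a, hfa⟩
          rw [if_neg (by rw [Finset.card_erase_of_mem hfa]; omega),
            if_neg (by rw [Finset.card_erase_of_mem hfb]; omega), sub_zero]
        · have h1 : 1 ≤ f.card := Finset.card_pos.2 ⟨a, hfa⟩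
          rw [if_neg (by rw [Finset.card_erase_of_mem hfa]; omega),
            if_pos (by rw [Finset.erase_eq_of_notMem hfb]; omega),
            Finset.erase_eq_of_notMem hfb,
            podVec_eq_zero_of_mem L f hfa haL, zero_sub, neg_zero]
        · have h1 : 1 ≤ f.card := Finset.card_pos.2 ⟨b, hfb⟩
          rw [if_pos (by rw [Finset.erase_eq_of_notMem hfa]; omega),
            if_neg (by rw [Finset.card_erase_of_mem hfb]; omega),
            Finset.erase_eq_of_notMem hfa,
            podVec_eq_zero_of_mem L f hfb hbL, sub_zero]
        · rw [if_pos (by rw [Finset.erase_eq_of_notMem hfa]; omega),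
            if_pos (by rw [Finset.erase_eq_of_notMem hfb]; omega),
            Finset.erase_eq_of_notMem hfa, Finset.erase_eq_of_notMem hfb, sub_self]
      · have hca : (f.erase a).card ≠ L.length := by
          have := Finset.card_erase_le (s := f) (a := a)
          have := Finset.card_le_card (Finset.erase_subset a f)
          omega
        have hcb : (f.erase b).card ≠ L.length := by
          have := Finset.card_le_card (Finset.erase_subset b f)
          omega
        rw [if_neg hca, if_neg hcb, sub_zero]
lemma sum_swap_count (p : Finset V → Prop) [DecidablePred p]
    (q' : Finset V → Finset V → Prop) [∀ e, DecidablePred (q' e)] (F : Finset V → ℤ) :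
    ∑ e ∈ univ.filter p, ∑ Q ∈ univ.filter (q' e), F Q
      = ∑ Q ∈ univ, ((univ.filter fun e => p e ∧ q' e Q).card : ℤ) * F Q := by
  calc ∑ e ∈ univ.filter p, ∑ Q ∈ univ.filter (q' e), F Q
      = ∑ e ∈ univ.filter p, ∑ Q ∈ univ, if q' e Q then F Q else 0 :=
        Finset.sum_congr rfl fun e _ => Finset.sum_filter _ _
    _ = ∑ Q ∈ univ, ∑ e ∈ univ.filter p, if q' e Q then F Q else 0 := Finset.sum_comm
    _ = ∑ Q ∈ univ, ∑ e ∈ univ.filter (fun e => p e ∧ q' e Q), F Q := by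
        refine Finset.sum_congr rfl fun Q _ => ?_
        conv_rhs => rw [← Finset.filter_filter, Finset.sum_filter]
    _ = ∑ Q ∈ univ, ((univ.filter fun e => p e ∧ q' e Q).card : ℤ) * F Q := by
        refine Finset.sum_congr rfl fun Q _ => ?_
        rw [Finset.sum_const, nsmul_eq_mul]

lemma card_between (I Q : Finset V) (hIQ : I ⊆ Q) (j : ℕ) (hj : I.card ≤ j) :
    (univ.filter fun e : Finset V => e.card = j ∧ I ⊆ e ∧ e ⊆ Q).card
      = (Q.card - I.card).choose (j - I.card) := by
  have hc : (Q \ I).card = Q.card - I.card := Finset.card_sdiff_of_subset hIQ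
  rw [← hc, ← Finset.card_powersetCard]
  refine Finset.card_nbij' (fun e => e \ I) (fun s => s ∪ I) ?_ ?_ ?_ ?_
  · intro e he
    simp only [Finset.mem_coe, Finset.mem_filter, Finset.mem_univ, true_and] at he
    obtain ⟨h1, h2, h3⟩ := he
    rw [Finset.mem_coe, Finset.mem_powersetCard]
    exact ⟨Finset.sdiff_subset_sdiff h3 Finset.Subset.rfl, by rw [Finset.card_sdiff_of_subset h2, h1]⟩
  · intro s hs
    rw [Finset.mem_coe, Finset.mem_powersetCard] at hs
    obtain ⟨h1, h2⟩ := hs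
    have hdisj : Disjoint s I := by
      rw [Finset.disjoint_left]
      intro x hx
      exact (Finset.mem_sdiff.1 (h1 hx)).2
    simp only [Finset.mem_coe, Finset.mem_filter, Finset.mem_univ, true_and]
    refine ⟨by rw [Finset.card_union_of_disjoint hdisj, h2]; omega,
      Finset.subset_union_right, ?_⟩
    apply Finset.union_subset _ hIQ
    exact h1.trans (Finset.sdiff_subset)
  · intro e he
    simp only [Finset.mem_coe, Finset.mem_filter, Finset.mem_univ, true_and] at he
    exact Finset.sdiff_union_of_subset he.2.1
  · intro s hs
    rw [Finset.mem_coe, Finset.mem_powersetCard] at hs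
    have hdisj : Disjoint s I := by
      rw [Finset.disjoint_left]
      intro x hx
      exact (Finset.mem_sdiff.1 (hs.1 hx)).2
    exact Finset.union_sdiff_cancel_right hdisj

lemma deg_of_bdry (q j : ℕ) (Φ : Finset V → ℤ) (I : Finset V) (hj : I.card ≤ j) :
    ∑ e ∈ univ.filter (fun e : Finset V => e.card = j ∧ I ⊆ e),
        ∑ Q ∈ univ.filter (fun Q : Finset V => Q.card = q ∧ e ⊆ Q), Φ Q
      = ((q - I.card).choose (j - I.card) : ℤ) *
        ∑ Q ∈ univ.filter (fun Q : Finset V => Q.card = q ∧ I ⊆ Q), Φ Q := by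
  rw [sum_swap_count, Finset.mul_sum]
  rw [Finset.sum_filter]
  refine Finset.sum_congr rfl fun Q _ => ?_
  by_cases hQ : Q.card = q ∧ I ⊆ Q
  · rw [if_pos hQ]
    have hfe : (univ.filter fun e : Finset V => (e.card = j ∧ I ⊆ e) ∧ Q.card = q ∧ e ⊆ Q)
        = univ.filter fun e : Finset V => e.card = j ∧ I ⊆ e ∧ e ⊆ Q := by
      apply Finset.filter_congr
      intro e _
      constructor
      · rintro ⟨⟨h1, h2⟩, _, h3⟩; exact ⟨h1, h2, h3⟩
      · rintro ⟨h1, h2, h3⟩; exact ⟨⟨h1, h2⟩, hQ.1, h3⟩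
    rw [hfe, card_between I Q hQ.2 j hj, hQ.1]
  · rw [if_neg hQ]
    have hfe : (univ.filter fun e : Finset V => (e.card = j ∧ I ⊆ e) ∧ Q.card = q ∧ e ⊆ Q)
        = ∅ := by
      ext e
      simp only [Finset.mem_filter, Finset.mem_univ, true_and, Finset.notMem_empty, iff_false]
      rintro ⟨⟨h1, h2⟩, h3, h4⟩
      exact hQ ⟨h3, h2.trans h4⟩
    rw [hfe]
    simp

def podSet (r : ℕ) (S : Finset V) : Set (Finset V → ℤ) :=
  {g | ∃ L : List (V × V), L.length = r ∧ GoodPod L ∧ podVerts L ⊆ S ∧ g = podVec L}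

lemma pod_in_bdry (r1 q : ℕ) (hq : r1 ≤ q) (hV : q + r1 ≤ Fintype.card V)
    (L : List (V × V)) (hG : GoodPod L) (hlen : L.length = r1) :
    ∃ Φ : Finset V → ℤ, ∀ e : Finset V,
      (if e.card = r1 then ∑ Q ∈ univ.filter (fun Q : Finset V => Q.card = q ∧ e ⊆ Q), Φ Q
        else 0) = podVec L e := by
  have hvc : (univ \ podVerts L).card ≥ q - r1 := by
    have h1 : (univ \ podVerts L).card = Fintype.card V - (podVerts L).card := by
      rw [Finset.card_sdiff_of_subset (Finset.subset_univ _), Finset.card_univ]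
    have h2 := podVerts_card_le L
    rw [hlen] at h2
    omega
  obtain ⟨C, hCsub, hCcard⟩ := Finset.exists_subset_card_eq hvc
  have hCdisj : ∀ x ∈ C, x ∉ podVerts L := by
    intro x hx
    exact (Finset.mem_sdiff.1 (hCsub hx)).2
  refine ⟨fun Q => if C ⊆ Q then podVec L (Q \ C) else 0, fun e => ?_⟩
  by_cases hec : e.card = r1
  · rw [if_pos hec]
    have step1 : ∑ Q ∈ univ.filter (fun Q : Finset V => Q.card = q ∧ e ⊆ Q),
          (if C ⊆ Q then podVec L (Q \ C) else 0)
        = ∑ Q ∈ univ.filter (fun Q : Finset V => (Q.card = q ∧ e ⊆ Q) ∧ C ⊆ Q),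
          podVec L (Q \ C) := by
      conv_rhs => rw [← Finset.filter_filter, Finset.sum_filter]
    have step2 : ∑ Q ∈ univ.filter (fun Q : Finset V => (Q.card = q ∧ e ⊆ Q) ∧ C ⊆ Q),
          podVec L (Q \ C)
        = ∑ X ∈ univ.filter (fun X : Finset V =>
            (X.card = r1 ∧ e \ C ⊆ X) ∧ Disjoint X C), podVec L X := by
      refine Finset.sum_nbij' (fun Q => Q \ C) (fun X => X ∪ C) ?_ ?_ ?_ ?_ ?_
      · intro Q hQ
        simp only [Finset.mem_filter, Finset.mem_univ, true_and] at hQ ⊢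
        obtain ⟨⟨h1, h2⟩, h3⟩ := hQ
        refine ⟨⟨?_, Finset.sdiff_subset_sdiff h2 Finset.Subset.rfl⟩, Finset.sdiff_disjoint⟩
        rw [Finset.card_sdiff_of_subset h3, h1, hCcard]
        omega
      · intro X hX
        simp only [Finset.mem_filter, Finset.mem_univ, true_and] at hX ⊢
        obtain ⟨⟨h1, h2⟩, h3⟩ := hX
        refine ⟨⟨?_, ?_⟩, Finset.subset_union_right⟩
        · rw [Finset.card_union_of_disjoint h3, h1, hCcard]
          omega
        · intro x hx
          by_cases hxC : x ∈ C
          · exact Finset.mem_union_right _ hxC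
          · exact Finset.mem_union_left _ (h2 (Finset.mem_sdiff.2 ⟨hx, hxC⟩))
      · intro Q hQ
        simp only [Finset.mem_filter, Finset.mem_univ, true_and] at hQ
        exact Finset.sdiff_union_of_subset hQ.2
      · intro X hX
        simp only [Finset.mem_filter, Finset.mem_univ, true_and] at hX
        exact Finset.union_sdiff_cancel_right hX.2
      · intro Q _; rfl
    have step3 : ∑ X ∈ univ.filter (fun X : Finset V =>
          (X.card = r1 ∧ e \ C ⊆ X) ∧ Disjoint X C), podVec L X
        = ∑ X ∈ univ.filter (fun X : Finset V => X.card = r1 ∧ e \ C ⊆ X), podVec L X := by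
      refine Finset.sum_subset ?_ ?_
      · intro X hX
        simp only [Finset.mem_filter, Finset.mem_univ, true_and] at hX ⊢
        exact hX.1
      · intro X hX1 hX2
        simp only [Finset.mem_filter, Finset.mem_univ, true_and] at hX1 hX2
        have : ¬ Disjoint X C := fun h => hX2 ⟨hX1, h⟩
        rw [Finset.not_disjoint_iff] at this
        obtain ⟨x, hxX, hxC⟩ := this
        exact podVec_eq_zero_of_mem L X hxX (hCdisj x hxC)
    have hecC : (e \ C).card ≤ L.length := by
      rw [hlen]
      have := Finset.card_le_card (Finset.sdiff_subset (s := e) (t := C))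
      omega
    rw [step1, step2, step3]
    have := podsum L hG (e \ C) hecC
    rw [hlen] at this
    rw [this]
    by_cases hd : Disjoint e C
    · rw [Finset.sdiff_eq_self_of_disjoint hd, if_pos hec]
    · rw [Finset.not_disjoint_iff] at hd
      obtain ⟨x, hxe, hxC⟩ := hd
      have hlt : (e \ C).card < r1 := by
        have hss : e \ C ⊂ e := by
          refine Finset.ssubset_iff_of_subset (Finset.sdiff_subset) |>.2 ⟨x, hxe, ?_⟩
          simp [hxC]
        have := Finset.card_lt_card hss
        omega
      rw [if_neg (by omega)]
      exact (podVec_eq_zero_of_mem L e hxe (hCdisj x hxC)).symm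
  · rw [if_neg hec]
    exact (podVec_eq_zero_of_card L e (by rw [hlen]; exact hec)).symm
lemma gam_identity (t a : ℕ) (h1 : 1 ≤ a) (h2 : a ≤ t) :
    (a : ℤ) * ((-1)^(a-1) * ((a-1).factorial : ℤ) * ((t - (a-1)).factorial : ℤ))
      + ((t + 1 - a : ℕ) : ℤ) * ((-1)^a * (a.factorial : ℤ) * ((t - a).factorial : ℤ)) = 0 := by
  obtain ⟨a', rfl⟩ : ∃ a', a = a' + 1 := ⟨a - 1, by omega⟩
  have hm : t - a' = (t - (a' + 1)) + 1 := by omega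
  have hm2 : t + 1 - (a' + 1) = (t - (a' + 1)) + 1 := by omega
  simp only [Nat.add_sub_cancel, hm, hm2]
  rw [Nat.factorial_succ (t - (a' + 1)), Nat.factorial_succ a']
  push_cast
  ring

lemma null_zero (t : ℕ) (S : Finset V) (hS : S.card ≤ 2 * t + 1) (J : Finset V → ℤ)
    (hsupp : ∀ e : Finset V, e.card = t + 1 → J e ≠ 0 → e ⊆ S)
    (hdeg : ∀ I : Finset V, I.card = t →
      ∑ e ∈ univ.filter (fun e : Finset V => e.card = t + 1 ∧ I ⊆ e), J e = 0) :
    ∀ e : Finset V, e.card = t + 1 → J e = 0 := by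
  intro e hec
  by_cases heS : e ⊆ S
  swap
  · by_contra hne
    exact heS (hsupp e hec hne)
  -- the γ weights
  set γ : ℕ → ℤ := fun a => (-1)^a * (a.factorial : ℤ) * ((t - a).factorial : ℤ) with hγ
  have hkey : (0 : ℤ) = ∑ I ∈ S.powersetCard t,
      γ (I ∩ (S \ e)).card * ∑ f ∈ univ.filter (fun f : Finset V => f.card = t + 1 ∧ I ⊆ f), J f := by
    symm
    refine Finset.sum_eq_zero fun I hI => ?_
    rw [hdeg I (Finset.mem_powersetCard.1 hI).2, mul_zero]
  -- swap sums
  have hswap : ∑ I ∈ S.powersetCard t,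
        γ (I ∩ (S \ e)).card * ∑ f ∈ univ.filter (fun f : Finset V => f.card = t + 1 ∧ I ⊆ f), J f
      = ∑ f ∈ univ, if f.card = t + 1 then
          (∑ I ∈ (S.powersetCard t).filter (fun I => I ⊆ f), γ (I ∩ (S \ e)).card) * J f
        else 0 := by
    calc ∑ I ∈ S.powersetCard t,
          γ (I ∩ (S \ e)).card * ∑ f ∈ univ.filter (fun f : Finset V => f.card = t + 1 ∧ I ⊆ f), J f
        = ∑ I ∈ S.powersetCard t, ∑ f ∈ univ,
            if f.card = t + 1 ∧ I ⊆ f then γ (I ∩ (S \ e)).card * J f else 0 := by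
          refine Finset.sum_congr rfl fun I _ => ?_
          rw [Finset.mul_sum, Finset.sum_filter]
      _ = ∑ f ∈ univ, ∑ I ∈ S.powersetCard t,
            if f.card = t + 1 ∧ I ⊆ f then γ (I ∩ (S \ e)).card * J f else 0 := Finset.sum_comm
      _ = _ := by
          refine Finset.sum_congr rfl fun f _ => ?_
          by_cases hfc : f.card = t + 1
          · rw [if_pos hfc, Finset.sum_mul, Finset.sum_filter]
            refine Finset.sum_congr rfl fun I _ => ?_
            by_cases hIf : I ⊆ f
            · rw [if_pos ⟨hfc, hIf⟩, if_pos hIf]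
            · rw [if_neg (fun h => hIf h.2), if_neg hIf]
          · rw [if_neg hfc]
            refine Finset.sum_eq_zero fun I _ => ?_
            rw [if_neg (fun h => hfc h.1)]
  -- inner weight evaluation
  have hW : ∀ f : Finset V, f.card = t + 1 → f ⊆ S →
      (∑ I ∈ (S.powersetCard t).filter (fun I => I ⊆ f), γ (I ∩ (S \ e)).card)
        = if f = e then ((t+1).factorial : ℤ) else 0 := by
    intro f hfc hfS
    have hfilt : (S.powersetCard t).filter (fun I => I ⊆ f) = f.powersetCard t := by
      ext I
      simp only [Finset.mem_filter, Finset.mem_powersetCard]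
      constructor
      · rintro ⟨⟨_, h2⟩, h3⟩; exact ⟨h3, h2⟩
      · rintro ⟨h1, h2⟩; exact ⟨⟨h1.trans hfS, h2⟩, h1⟩
    have himg : f.powersetCard t = f.image (fun x => f.erase x) := by
      ext I
      simp only [Finset.mem_powersetCard, Finset.mem_image]
      constructor
      · rintro ⟨h1, h2⟩
        have : (f \ I).Nonempty := by
          rw [← Finset.card_pos, Finset.card_sdiff_of_subset h1]
          omega
        obtain ⟨x, hx⟩ := this
        rw [Finset.mem_sdiff] at hx
        refine ⟨x, hx.1, ?_⟩
        have hsub : I ⊆ f.erase x := fun y hy =>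
          Finset.mem_erase.2 ⟨fun hyx => hx.2 (hyx ▸ hy), h1 hy⟩
        exact (Finset.eq_of_subset_of_card_le hsub
          (by rw [Finset.card_erase_of_mem hx.1, hfc, h2]; omega)).symm
      · rintro ⟨x, hx, rfl⟩
        exact ⟨Finset.erase_subset x f, by rw [Finset.card_erase_of_mem hx, hfc]; omega⟩
    rw [hfilt, himg, Finset.sum_image (fun x hx y hy h => Finset.erase_injOn f hx hy h)]
    -- split over x ∈ S \ e or not
    have herase : ∀ x ∈ f, f.erase x ∩ (S \ e) = (f ∩ (S \ e)).erase x := by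
      intro x _
      ext y
      simp only [Finset.mem_inter, Finset.mem_erase]
      tauto
    set a := (f ∩ (S \ e)).card with ha
    have hsum : ∑ x ∈ f, γ ((f.erase x) ∩ (S \ e)).card
        = ∑ x ∈ f, (if x ∈ S \ e then γ (a - 1) else γ a) := by
      refine Finset.sum_congr rfl fun x hx => ?_
      rw [herase x hx]
      by_cases hxe : x ∈ S \ e
      · rw [if_pos hxe, Finset.card_erase_of_mem (Finset.mem_inter.2 ⟨hx, hxe⟩)]
      · rw [if_neg hxe, Finset.erase_eq_of_notMem (fun h => hxe (Finset.mem_inter.1 h).2)]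
    rw [hsum, Finset.sum_ite, Finset.sum_const, Finset.sum_const]
    have hfa : (f.filter (fun x => x ∈ S \ e)).card = a := by
      rw [ha]
      congr 1
      try exact Finset.filter_mem_eq_inter
    have hfb : (f.filter (fun x => x ∉ S \ e)).card = (t + 1) - a := by
      rw [Finset.filter_not, Finset.card_sdiff_of_subset (Finset.filter_subset _ _), hfa, hfc]
      try rfl
    rw [hfa, hfb, nsmul_eq_mul, nsmul_eq_mul]
    by_cases hfe : f = e
    · subst hfe
      have ha0 : a = 0 := by
        rw [ha, Finset.card_eq_zero]
        ext y
        simp only [Finset.mem_inter, Finset.mem_sdiff, Finset.notMem_empty, iff_false]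
        tauto
      rw [if_pos rfl, ha0, hγ]
      simp only [Nat.sub_zero, Nat.cast_ofNat, pow_zero, Nat.factorial_zero]
      rw [Nat.factorial_succ]
      push_cast
      ring
    · rw [if_neg hfe]
      have ha1 : 1 ≤ a := by
        rw [ha]
        rcases Finset.eq_empty_or_nonempty (f ∩ (S \ e)) with hem | hne
        · exfalso
          apply hfe
          apply Finset.eq_of_subset_of_card_le _ (by omega)
          intro y hy
          by_contra hye
          have : y ∈ f ∩ (S \ e) := Finset.mem_inter.2 ⟨hy, Finset.mem_sdiff.2 ⟨hfS hy, hye⟩⟩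
          rw [hem] at this
          exact absurd this (Finset.notMem_empty y)
        · have := Finset.card_pos.2 hne
          omega
      have ha2 : a ≤ t := by
        have h1 : a ≤ (S \ e).card := Finset.card_le_card (Finset.inter_subset_right)
        have h2 : (S \ e).card = S.card - (t + 1) := by
          rw [Finset.card_sdiff_of_subset heS, hec]
        have h3 : t + 1 ≤ S.card := hec ▸ Finset.card_le_card heS
        omega
      rw [hγ]
      exact gam_identity t a ha1 ha2
  -- final assembly
  rw [hswap] at hkey
  have hsingle : ∑ f ∈ univ, (if f.card = t + 1 then
        (∑ I ∈ (S.powersetCard t).filter (fun I => I ⊆ f), γ (I ∩ (S \ e)).card) * J f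
      else 0)
      = if e.card = t + 1 then
        (∑ I ∈ (S.powersetCard t).filter (fun I => I ⊆ e), γ (I ∩ (S \ e)).card) * J e
      else 0 := by
    refine Finset.sum_eq_single_of_mem e (Finset.mem_univ e) fun f _ hfe => ?_
    by_cases hfc : f.card = t + 1
    · by_cases hJf : J f = 0
      · rw [if_pos hfc, hJf, mul_zero]
      · rw [if_pos hfc, hW f hfc (hsupp f hfc hJf), if_neg hfe, zero_mul]
    · rw [if_neg hfc]
  rw [hsingle, if_pos hec, hW e hec heS, if_pos rfl] at hkey
  have hne : ((t + 1).factorial : ℤ) ≠ 0 := by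
    exact_mod_cast Nat.factorial_ne_zero (t + 1)
  rcases mul_eq_zero.1 hkey.symm with h | h
  · exact absurd h hne
  · exact h
lemma podSet_mono (r : ℕ) {S T : Finset V} (hST : S ⊆ T) : podSet r S ⊆ podSet r T := by
  rintro g ⟨L, h1, h2, h3, h4⟩
  exact ⟨L, h1, h2, h3.trans hST, h4⟩

lemma podVec_single (a b : V) (e : Finset V) :
    podVec [(a, b)] e = (if e = {a} then 1 else 0) - (if e = {b} then 1 else 0) := by
  simp only [podVec]
  congr 1
  · by_cases ha : a ∈ e
    · rw [if_pos ha]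
      by_cases h : e = {a}
      · rw [if_pos h, if_pos (by rw [h]; exact Finset.erase_singleton a)]
      · rw [if_neg h, if_neg ?_]
        intro hh
        apply h
        have := Finset.insert_erase ha
        rw [hh] at this
        rw [← this]
        rfl
    · rw [if_neg ha, if_neg (fun h => ha (by rw [h]; exact Finset.mem_singleton_self a))]
  · by_cases hb : b ∈ e
    · rw [if_pos hb]
      by_cases h : e = {b}
      · rw [if_pos h, if_pos (by rw [h]; exact Finset.erase_singleton b)]
      · rw [if_neg h, if_neg ?_]
        intro hh
        apply h
        have := Finset.insert_erase hb
        rw [hh] at this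
        rw [← this]
        rfl
    · rw [if_neg hb, if_neg (fun h => hb (by rw [h]; exact Finset.mem_singleton_self b))]

lemma null_span : ∀ (r : ℕ) (S : Finset V) (J : Finset V → ℤ),
    (∀ e : Finset V, e.card = r → J e ≠ 0 → e ⊆ S) →
    (∀ I : Finset V, I.card = r - 1 →
      ∑ e ∈ univ.filter (fun e : Finset V => e.card = r ∧ I ⊆ e), J e = 0) →
    (fun e => if e.card = r then J e else 0) ∈ Submodule.span ℤ (podSet r S) := by
  intro r
  induction r with
  | zero =>
    intro S J hsupp hdeg
    have h0 : (fun e : Finset V => if e.card = 0 then J e else 0) = 0 := by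
      funext e
      by_cases hc : e.card = 0
      · rw [if_pos hc]
        have he : e = ∅ := Finset.card_eq_zero.1 hc
        have hd := hdeg ∅ (by simp)
        have hset : univ.filter (fun e : Finset V => e.card = 0 ∧ (∅ : Finset V) ⊆ e)
            = {(∅ : Finset V)} := by
          ext X; simp [Finset.card_eq_zero]
        rw [hset, Finset.sum_singleton] at hd
        rw [he, hd]
        rfl
      · rw [if_neg hc]
        rfl
    rw [h0]
    exact Submodule.zero_mem _
  | succ r ih =>
    by_cases hr0 : r = 0
    · -- level 1 : telescoping
      subst hr0
      intro S J hsupp hdeg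
      by_cases hSe : S = ∅
      · have h0 : (fun e : Finset V => if e.card = 1 then J e else 0) = 0 := by
          funext e
          by_cases hc : e.card = 1
          · rw [if_pos hc]
            by_contra hne
            have := hsupp e hc (by simpa using hne)
            rw [hSe, Finset.subset_empty] at this
            rw [this] at hc
            simp at hc
          · rw [if_neg hc]; rfl
        rw [h0]
        exact Submodule.zero_mem _
      · obtain ⟨v₀, hv₀⟩ := Finset.nonempty_iff_ne_empty.2 hSe
        have htot : ∑ x ∈ S, J {x} = 0 := by
          have hd := hdeg ∅ (by simp)
          have himg : ∑ x ∈ S, J {x} = ∑ e ∈ S.image (fun x => ({x} : Finset V)), J e := by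
            rw [Finset.sum_image]
            intro x _ y _ h
            exact Finset.singleton_injective h
          rw [himg, ← hd]
          refine Finset.sum_subset ?_ ?_
          · intro e he
            obtain ⟨x, hx, rfl⟩ := Finset.mem_image.1 he
            simp
          · intro e he hne
            simp only [Finset.mem_filter, Finset.mem_univ, true_and] at he
            by_contra hJe
            have hes := hsupp e he.1 hJe
            obtain ⟨x, rfl⟩ := Finset.card_eq_one.1 he.1
            exact hne (Finset.mem_image.2 ⟨x, hes (Finset.mem_singleton_self x), rfl⟩)
        have heq : (fun e : Finset V => if e.card = 1 then J e else 0)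
            = ∑ v ∈ S.erase v₀, J {v} • podVec [(v, v₀)] := by
          funext e
          rw [Finset.sum_apply]
          simp only [Pi.smul_apply, smul_eq_mul, podVec_single]
          by_cases hc : e.card = 1
          · rw [if_pos hc]
            obtain ⟨w, rfl⟩ := Finset.card_eq_one.1 hc
            by_cases hw : w = v₀
            · subst hw
              have hterm : ∀ v ∈ S.erase w,
                  J {v} * ((if ({w} : Finset V) = {v} then (1:ℤ) else 0)
                    - (if ({w} : Finset V) = {w} then 1 else 0)) = -J {v} := by
                intro v hv
                rw [if_neg (fun h => (Finset.mem_erase.1 hv).1 (Finset.singleton_injective h.symm)),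
                  if_pos rfl]
                ring
              rw [Finset.sum_congr rfl hterm, Finset.sum_neg_distrib]
              have hsum : ∑ x ∈ S.erase w, J {x} + J {w} = 0 := by
                rw [← htot]
                exact Finset.sum_erase_add S _ hv₀
              linarith
            · have hterm : ∀ v ∈ S.erase v₀,
                  J {v} * ((if ({w} : Finset V) = {v} then (1:ℤ) else 0)
                    - (if ({w} : Finset V) = {v₀} then 1 else 0))
                    = if v = w then J {v} else 0 := by
                intro v hv
                rw [if_neg (fun h => hw (Finset.singleton_injective h))]
                by_cases hvw : v = w
                · rw [if_pos hvw, if_pos (by rw [hvw]), sub_zero, mul_one]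
                · rw [if_neg hvw, if_neg (fun h => hvw (Finset.singleton_injective h).symm),
                    sub_zero, mul_zero]
              rw [Finset.sum_congr rfl hterm, Finset.sum_ite_eq' (S.erase v₀) w (fun v => J {v})]
              by_cases hwS : w ∈ S.erase v₀
              · rw [if_pos hwS]
              · rw [if_neg hwS]
                by_contra hJw
                have := hsupp {w} hc hJw
                exact hwS (Finset.mem_erase.2 ⟨hw, this (Finset.mem_singleton_self w)⟩)
          · rw [if_neg hc]
            symm
            refine Finset.sum_eq_zero fun v hv => ?_
            rw [if_neg (fun h => hc (by rw [h]; simp)),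
              if_neg (fun h => hc (by rw [h]; simp)), sub_zero, mul_zero]
        rw [heq]
        refine Submodule.sum_mem _ fun v hv => Submodule.smul_mem _ _ (Submodule.subset_span ?_)
        refine ⟨[(v, v₀)], rfl, ?_, ?_, rfl⟩
        · exact ⟨(Finset.mem_erase.1 hv).1, by simp [podVerts], by simp [podVerts], trivial⟩
        · intro x hx
          have hx2 : x = v ∨ x = v₀ := by simpa [podVerts] using hx
          rcases hx2 with h | h
          · subst h; exact Finset.mem_of_mem_erase hv
          · subst h; exact hv₀
    · -- level ≥ 2 : strip vertices
      have hr1 : 1 ≤ r := Nat.one_le_iff_ne_zero.2 hr0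
      suffices h : ∀ N (S : Finset V) (J : Finset V → ℤ), S.card = N →
          (∀ e : Finset V, e.card = r + 1 → J e ≠ 0 → e ⊆ S) →
          (∀ I : Finset V, I.card = r + 1 - 1 →
            ∑ e ∈ univ.filter (fun e : Finset V => e.card = r + 1 ∧ I ⊆ e), J e = 0) →
          (fun e => if e.card = r + 1 then J e else 0) ∈ Submodule.span ℤ (podSet (r+1) S) by
        intro S J hs hd
        exact h S.card S J rfl hs hd
      intro N
      induction N using Nat.strong_induction_on with
      | _ N ihN =>
      intro S J hN hsupp hdeg
      by_cases hsmall : S.card ≤ 2 * r + 1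
      · -- base case : J vanishes on (r+1)-sets
        have hz := null_zero r S (by omega) J hsupp (fun I hI => hdeg I (by omega))
        have h0 : (fun e : Finset V => if e.card = r + 1 then J e else 0) = 0 := by
          funext e
          by_cases hc : e.card = r + 1
          · rw [if_pos hc, hz e hc]; rfl
          · rw [if_neg hc]; rfl
        rw [h0]
        exact Submodule.zero_mem _
      · obtain ⟨v, hv⟩ : S.Nonempty := Finset.card_pos.1 (by omega)
        set Jv : Finset V → ℤ := fun e' => if v ∈ e' then 0 else J (insert v e') with hJv
        have hsupp_v : ∀ e', e'.card = r → Jv e' ≠ 0 → e' ⊆ S.erase v := by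
          intro e' hc hne
          by_cases hvm : v ∈ e'
          · exfalso; apply hne; rw [hJv]; simp [hvm]
          · have hJ : J (insert v e') ≠ 0 := by
              intro h0
              apply hne
              rw [hJv]
              simp [hvm, h0]
            have hsub := hsupp (insert v e')
              (by rw [Finset.card_insert_of_notMem hvm, hc]) hJ
            intro x hx
            exact Finset.mem_erase.2 ⟨fun hxv => hvm (hxv ▸ hx),
              hsub (Finset.mem_insert_of_mem hx)⟩
        have hdeg_v : ∀ I : Finset V, I.card = r - 1 →
            ∑ e' ∈ univ.filter (fun e' : Finset V => e'.card = r ∧ I ⊆ e'), Jv e' = 0 := by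
          intro I hI
          by_cases hvI : v ∈ I
          · refine Finset.sum_eq_zero fun e' he' => ?_
            simp only [Finset.mem_filter, Finset.mem_univ, true_and] at he'
            rw [hJv]
            simp [he'.2 hvI]
          · have h1 : ∑ e' ∈ univ.filter
                  (fun e' : Finset V => (e'.card = r ∧ I ⊆ e') ∧ v ∉ e'), Jv e'
                = ∑ e' ∈ univ.filter (fun e' : Finset V => e'.card = r ∧ I ⊆ e'), Jv e' := by
              refine Finset.sum_subset ?_ ?_
              · intro e' he'
                simp only [Finset.mem_filter, Finset.mem_univ, true_and] at he' ⊢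
                exact he'.1
              · intro e' he1 he2
                simp only [Finset.mem_filter, Finset.mem_univ, true_and] at he1 he2
                have hvm : v ∈ e' := by
                  by_contra h
                  exact he2 ⟨he1, h⟩
                rw [hJv]
                simp [hvm]
            rw [← h1]
            have h2 : ∑ e' ∈ univ.filter
                  (fun e' : Finset V => (e'.card = r ∧ I ⊆ e') ∧ v ∉ e'), Jv e'
                = ∑ e ∈ univ.filter
                  (fun e : Finset V => e.card = r + 1 ∧ insert v I ⊆ e), J e := by
              refine Finset.sum_nbij' (fun e' => insert v e') (fun e => e.erase v) ?_ ?_ ?_ ?_ ?_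
              · intro e' he'
                simp only [Finset.mem_filter, Finset.mem_univ, true_and] at he' ⊢
                obtain ⟨⟨h1', h2'⟩, h3'⟩ := he'
                exact ⟨by rw [Finset.card_insert_of_notMem h3', h1'],
                  Finset.insert_subset_insert v h2'⟩
              · intro e he
                simp only [Finset.mem_filter, Finset.mem_univ, true_and] at he ⊢
                obtain ⟨h1', h2'⟩ := he
                have hve : v ∈ e := h2' (Finset.mem_insert_self v I)
                refine ⟨⟨by rw [Finset.card_erase_of_mem hve, h1']; omega, ?_⟩,
                  Finset.notMem_erase v e⟩
                intro x hx
                exact Finset.mem_erase.2 ⟨fun hxv => hvI (hxv ▸ hx),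
                  h2' (Finset.mem_insert_of_mem hx)⟩
              · intro e' he'
                simp only [Finset.mem_filter, Finset.mem_univ, true_and] at he'
                exact Finset.erase_insert he'.2
              · intro e he
                simp only [Finset.mem_filter, Finset.mem_univ, true_and] at he
                exact Finset.insert_erase (he.2 (Finset.mem_insert_self v I))
              · intro e' he'
                simp only [Finset.mem_filter, Finset.mem_univ, true_and] at he'
                rw [hJv]
                simp [he'.2]
            rw [h2]
            exact hdeg (insert v I)
              (by rw [Finset.card_insert_of_notMem hvI, hI]; omega)
        have hlink := ih (S.erase v) Jv hsupp_v hdeg_v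
        rw [Submodule.mem_span_set] at hlink
        obtain ⟨c, hcsupp, hcsum⟩ := hlink
        have hchoice : ∀ g ∈ c.support, ∃ L : List (V × V),
            L.length = r ∧ GoodPod L ∧ podVerts L ⊆ S.erase v ∧ g = podVec L :=
          fun g hg => hcsupp hg
        choose Lf hLlen hLgood hLsub hLeq using hchoice
        have hwex : ∀ g (hg : g ∈ c.support), ∃ w, w ∈ (S.erase v) \ podVerts (Lf g hg) := by
          intro g hg
          have hcard : 0 < ((S.erase v) \ podVerts (Lf g hg)).card := by
            have h1 : (podVerts (Lf g hg)).card ≤ 2 * r := by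
              have := podVerts_card_le (Lf g hg)
              rw [hLlen g hg] at this
              exact this
            have h2 : (S.erase v).card = S.card - 1 := Finset.card_erase_of_mem hv
            have h3 := Finset.le_card_sdiff (podVerts (Lf g hg)) (S.erase v)
            omega
          exact Finset.card_pos.1 hcard
        choose wf hwf using hwex
        have hgoodlift : ∀ g (hg : g ∈ c.support), GoodPod ((v, wf g hg) :: Lf g hg) := by
          intro g hg
          have hw := Finset.mem_sdiff.1 (hwf g hg)
          refine ⟨?_, ?_, hw.2, hLgood g hg⟩
          · intro hvw
            have hvw' : v = wf g hg := hvw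
            rw [← hvw'] at hw
            exact Finset.notMem_erase v S hw.1
          · intro hvL
            exact Finset.notMem_erase v S (hLsub g hg hvL)
        have hliftlen : ∀ g (hg : g ∈ c.support), ((v, wf g hg) :: Lf g hg).length = r + 1 := by
          intro g hg
          simp [hLlen g hg]
        set F : Finset V → ℤ :=
          ∑ g ∈ c.support.attach, c g.1 • podVec ((v, wf g.1 g.2) :: Lf g.1 g.2) with hF
        have hFapp : ∀ e : Finset V,
            F e = ∑ g ∈ c.support.attach, c g.1 * podVec ((v, wf g.1 g.2) :: Lf g.1 g.2) e := by
          intro e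
          rw [hF, Finset.sum_apply]
          exact Finset.sum_congr rfl fun g _ => by simp
        have hrepr : (c.sum fun mi r => r • mi) = ∑ g ∈ c.support, c g • g := rfl
        rw [hrepr] at hcsum
        have hcsum' : ∀ x : Finset V,
            ∑ g ∈ c.support, c g * g x = if x.card = r then Jv x else 0 := by
          intro x
          have h := congrFun hcsum x
          rw [Finset.sum_apply] at h
          simpa using h
        have hFv : ∀ e : Finset V, e.card = r + 1 → v ∈ e → F e = J e := by
          intro e hec hve
          rw [hFapp]
          have hterm : ∀ g ∈ c.support.attach,
              c g.1 * podVec ((v, wf g.1 g.2) :: Lf g.1 g.2) e = c g.1 * g.1 (e.erase v) := by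
            intro g _
            rw [podVec_cons_mem_fst (Lf g.1 g.2) e (hgoodlift g.1 g.2) hve, ← hLeq g.1 g.2]
          rw [Finset.sum_congr rfl hterm, Finset.sum_attach c.support (fun g => c g * g (e.erase v)),
            hcsum' (e.erase v), if_pos (by rw [Finset.card_erase_of_mem hve, hec]; omega),
            hJv]
          have hvne : v ∉ e.erase v := Finset.notMem_erase v e
          simp only [hvne, if_false]
          rw [Finset.insert_erase hve]
        set J' : Finset V → ℤ := fun e => J e - F e with hJ'
        have hsupp' : ∀ e, e.card = r + 1 → J' e ≠ 0 → e ⊆ S.erase v := by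
          intro e hec hne
          by_cases hvm : v ∈ e
          · exfalso
            apply hne
            rw [hJ']
            simp only
            rw [hFv e hec hvm]
            ring
          · have heS : e ⊆ S := by
              by_contra hnotS
              apply hne
              have hJe : J e = 0 := by
                by_contra hJe
                exact hnotS (hsupp e hec hJe)
              have hFe : F e = 0 := by
                rw [hFapp]
                refine Finset.sum_eq_zero fun g _ => ?_
                rcases eq_or_ne (podVec ((v, wf g.1 g.2) :: Lf g.1 g.2) e) 0 with h | h
                · rw [h, mul_zero]
                · exfalso
                  apply hnotS
                  have hsubv := (podVec_support _ _ h).2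
                  intro x hx
                  have hxm := hsubv hx
                  simp only [podVerts, Finset.mem_insert] at hxm
                  rcases hxm with h1 | h1 | h1
                  · exact absurd (h1 ▸ hx) hvm
                  · rw [h1]
                    exact Finset.mem_of_mem_erase (Finset.mem_sdiff.1 (hwf g.1 g.2)).1
                  · exact Finset.mem_of_mem_erase (hLsub g.1 g.2 h1)
              rw [hJ']
              simp only
              rw [hJe, hFe]
              ring
            intro x hx
            exact Finset.mem_erase.2 ⟨fun h => hvm (h ▸ hx), heS hx⟩
        have hdeg' : ∀ I : Finset V, I.card = r + 1 - 1 →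
            ∑ e ∈ univ.filter (fun e : Finset V => e.card = r + 1 ∧ I ⊆ e), J' e = 0 := by
          intro I hI
          have hFdeg : ∑ e ∈ univ.filter
              (fun e : Finset V => e.card = r + 1 ∧ I ⊆ e), F e = 0 := by
            have hswap : ∑ e ∈ univ.filter
                  (fun e : Finset V => e.card = r + 1 ∧ I ⊆ e), F e
                = ∑ g ∈ c.support.attach, ∑ e ∈ univ.filter
                  (fun e : Finset V => e.card = r + 1 ∧ I ⊆ e),
                  c g.1 * podVec ((v, wf g.1 g.2) :: Lf g.1 g.2) e := by
              rw [← Finset.sum_comm]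
              exact Finset.sum_congr rfl fun e _ => hFapp e
            rw [hswap]
            refine Finset.sum_eq_zero fun g _ => ?_
            rw [← Finset.mul_sum]
            have hps := podsum ((v, wf g.1 g.2) :: Lf g.1 g.2) (hgoodlift g.1 g.2) I
              (by rw [hliftlen g.1 g.2]; omega)
            rw [hliftlen g.1 g.2] at hps
            rw [hps, if_neg (by omega), mul_zero]
          have hJdeg := hdeg I hI
          have : ∑ e ∈ univ.filter (fun e : Finset V => e.card = r + 1 ∧ I ⊆ e), J' e
              = ∑ e ∈ univ.filter (fun e : Finset V => e.card = r + 1 ∧ I ⊆ e), (J e - F e) :=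
            rfl
          rw [this, Finset.sum_sub_distrib, hJdeg, hFdeg]
          ring
        have hrec := ihN ((S.erase v).card)
          (by rw [Finset.card_erase_of_mem hv, hN]; omega)
          (S.erase v) J' rfl hsupp' hdeg'
        have hsplit : (fun e : Finset V => if e.card = r + 1 then J e else 0)
            = (fun e => if e.card = r + 1 then J' e else 0) + F := by
          funext e
          simp only [Pi.add_apply]
          by_cases hc : e.card = r + 1
          · rw [if_pos hc, if_pos hc, hJ']
            simp only
            ring
          · rw [if_neg hc, if_neg hc, hFapp]
            have : ∀ g ∈ c.support.attach,
                c g.1 * podVec ((v, wf g.1 g.2) :: Lf g.1 g.2) e = 0 := by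
              intro g _
              rw [podVec_eq_zero_of_card _ _ (by rw [hliftlen g.1 g.2]; exact hc), mul_zero]
            rw [Finset.sum_eq_zero this]
            ring
        rw [hsplit]
        refine Submodule.add_mem _ ?_ ?_
        · exact Submodule.span_mono (podSet_mono (r+1) (Finset.erase_subset v S)) hrec
        · rw [hF]
          refine Submodule.sum_mem _ fun g _ => Submodule.smul_mem _ _ (Submodule.subset_span ?_)
          refine ⟨(v, wf g.1 g.2) :: Lf g.1 g.2, hliftlen g.1 g.2, hgoodlift g.1 g.2, ?_, rfl⟩
          intro x hx
          simp only [podVerts, Finset.mem_insert] at hx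
          rcases hx with h1 | h1 | h1
          · rw [h1]; exact hv
          · rw [h1]
            exact Finset.mem_of_mem_erase (Finset.mem_sdiff.1 (hwf g.1 g.2)).1
          · exact Finset.mem_of_mem_erase (hLsub g.1 g.2 h1)
theorem auxT (q : ℕ) : ∀ (r : ℕ), r < q → q + r ≤ Fintype.card V →
    ∀ J : Finset V → ℤ,
    (∀ I : Finset V, I.card ≤ r → ((q - I.card).choose (r - I.card) : ℤ) ∣
      ∑ e ∈ univ.filter (fun e : Finset V => e.card = r ∧ I ⊆ e), J e) →
    ∃ Φ : Finset V → ℤ, ∀ e : Finset V, e.card = r →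
      J e = ∑ Q ∈ univ.filter (fun Q : Finset V => Q.card = q ∧ e ⊆ Q), Φ Q := by
  intro r
  induction r with
  | zero =>
    intro hrq hn J _
    obtain ⟨Q₀, _, hQ₀⟩ := Finset.exists_subset_card_eq
      (show q ≤ (univ : Finset V).card by rw [Finset.card_univ]; omega)
    refine ⟨fun Q => if Q = Q₀ then J ∅ else 0, fun e he => ?_⟩
    have he' : e = ∅ := Finset.card_eq_zero.1 he
    subst he'
    rw [Finset.sum_ite_eq' (univ.filter (fun Q : Finset V => Q.card = q ∧ (∅ : Finset V) ⊆ Q))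
      Q₀ (fun _ => J ∅), if_pos (by simp [hQ₀])]
  | succ r ihr =>
    intro hrq hn J hdiv
    set s : Finset V → ℤ := fun I =>
      ∑ e ∈ univ.filter (fun e : Finset V => e.card = r + 1 ∧ I ⊆ e), J e with hs
    have hdvd : ∀ I : Finset V, I.card = r → ((q - r : ℕ) : ℤ) ∣ s I := by
      intro I hI
      have h := hdiv I (by omega)
      have h2 : r + 1 - r = 1 := by omega
      rw [hI, h2, Nat.choose_one_right] at h
      exact h
    set k : Finset V → ℤ := fun I => s I / ((q - r : ℕ) : ℤ) with hk
    have hks : ∀ I, I.card = r → ((q - r : ℕ) : ℤ) * k I = s I := by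
      intro I hI
      exact Int.mul_ediv_cancel' (hdvd I hI)
    set D : Finset V → ℤ := fun I => if I.card = r then k I else 0 with hD
    have hDk : ∀ I : Finset V, ∑ e ∈ univ.filter (fun e : Finset V => e.card = r ∧ I ⊆ e), D e
        = ∑ e ∈ univ.filter (fun e : Finset V => e.card = r ∧ I ⊆ e), k e := by
      intro I
      refine Finset.sum_congr rfl fun e he => ?_
      simp only [Finset.mem_filter, Finset.mem_univ, true_and] at he
      rw [hD]
      simp only
      rw [if_pos he.1]
    have hdivD : ∀ I : Finset V, I.card ≤ r → ((q - I.card).choose (r - I.card) : ℤ) ∣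
        ∑ e ∈ univ.filter (fun e : Finset V => e.card = r ∧ I ⊆ e), D e := by
      intro I hI
      have hkey : ((q - r : ℕ) : ℤ) *
            ∑ e ∈ univ.filter (fun e : Finset V => e.card = r ∧ I ⊆ e), k e
          = ((r + 1 - I.card : ℕ) : ℤ) *
            ∑ f ∈ univ.filter (fun f : Finset V => f.card = r + 1 ∧ I ⊆ f), J f := by
        rw [Finset.mul_sum]
        have h1 : ∑ e ∈ univ.filter (fun e : Finset V => e.card = r ∧ I ⊆ e),
              ((q - r : ℕ) : ℤ) * k e
            = ∑ e ∈ univ.filter (fun e : Finset V => e.card = r ∧ I ⊆ e), s e := by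
          refine Finset.sum_congr rfl fun e he => ?_
          simp only [Finset.mem_filter, Finset.mem_univ, true_and] at he
          exact hks e he.1
        rw [h1, hs]
        have h2 := deg_of_bdry (q := r + 1) (j := r) J I hI
        rw [h2]
        congr 2
        have h3 : r - I.card = (r + 1 - I.card) - 1 := by omega
        rw [h3, Nat.choose_symm (by omega), Nat.choose_one_right]
      obtain ⟨m, hm⟩ := hdiv I (by omega)
      have hid : (r + 1 - I.card) * ((q - I.card).choose (r + 1 - I.card))
          = ((q - I.card).choose (r - I.card)) * (q - r) := by
        have h4 : r + 1 - I.card = (r - I.card) + 1 := by omega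
        rw [h4, mul_comm, Nat.choose_succ_right_eq]
        congr 1
        omega
      have h5 : ((r + 1 - I.card : ℕ) : ℤ) * ((q - I.card).choose (r + 1 - I.card) : ℤ)
          = ((q - I.card).choose (r - I.card) : ℤ) * ((q - r : ℕ) : ℤ) := by
        exact_mod_cast congrArg (Nat.cast : ℕ → ℤ) hid
      refine ⟨m, ?_⟩
      have hne : ((q - r : ℕ) : ℤ) ≠ 0 := by
        have : 0 < q - r := by omega
        exact_mod_cast Nat.pos_iff_ne_zero.1 this
      apply mul_left_cancel₀ hne
      calc ((q - r : ℕ) : ℤ) * ∑ e ∈ univ.filter (fun e : Finset V => e.card = r ∧ I ⊆ e), D e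
          = ((q - r : ℕ) : ℤ) * ∑ e ∈ univ.filter (fun e : Finset V => e.card = r ∧ I ⊆ e), k e := by
            rw [hDk]
        _ = ((r + 1 - I.card : ℕ) : ℤ) * (((q - I.card).choose (r + 1 - I.card) : ℤ) * m) := by
            rw [hkey, hm]
        _ = (((r + 1 - I.card : ℕ) : ℤ) * ((q - I.card).choose (r + 1 - I.card) : ℤ)) * m := by
            ring
        _ = (((q - I.card).choose (r - I.card) : ℤ) * ((q - r : ℕ) : ℤ)) * m := by rw [h5]
        _ = ((q - r : ℕ) : ℤ) * (((q - I.card).choose (r - I.card) : ℤ) * m) := by ring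
    obtain ⟨Φ₁, hΦ₁⟩ := ihr (by omega) (by omega) D hdivD
    set J₂ : Finset V → ℤ := fun e =>
      J e - ∑ Q ∈ univ.filter (fun Q : Finset V => Q.card = q ∧ e ⊆ Q), Φ₁ Q with hJ₂
    have hdeg₂ : ∀ I : Finset V, I.card = (r + 1) - 1 →
        ∑ e ∈ univ.filter (fun e : Finset V => e.card = r + 1 ∧ I ⊆ e), J₂ e = 0 := by
      intro I hI
      have hIr : I.card = r := by omega
      have hsplit : ∑ e ∈ univ.filter (fun e : Finset V => e.card = r + 1 ∧ I ⊆ e), J₂ e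
          = (∑ e ∈ univ.filter (fun e : Finset V => e.card = r + 1 ∧ I ⊆ e), J e)
            - ∑ e ∈ univ.filter (fun e : Finset V => e.card = r + 1 ∧ I ⊆ e),
              ∑ Q ∈ univ.filter (fun Q : Finset V => Q.card = q ∧ e ⊆ Q), Φ₁ Q := by
        rw [← Finset.sum_sub_distrib]
      rw [hsplit]
      have h1 := deg_of_bdry (q := q) (j := r + 1) Φ₁ I (by omega)
      rw [h1, hIr]
      have h2 : r + 1 - r = 1 := by omega
      rw [h2, Nat.choose_one_right]
      have h3 : ∑ Q ∈ univ.filter (fun Q : Finset V => Q.card = q ∧ I ⊆ Q), Φ₁ Q = k I := by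
        have := hΦ₁ I hIr
        rw [hD] at this
        simp only at this
        rw [if_pos hIr] at this
        exact this.symm
      rw [h3]
      have h4 : ∑ e ∈ univ.filter (fun e : Finset V => e.card = r + 1 ∧ I ⊆ e), J e = s I := rfl
      rw [h4, ← hks I hIr]
      ring
    have hns := null_span (r + 1) univ J₂ (fun e _ _ => Finset.subset_univ e) hdeg₂
    -- boundary map as a linear map
    set B : (Finset V → ℤ) →ₗ[ℤ] (Finset V → ℤ) :=
      { toFun := fun Φ => fun e => if e.card = r + 1 then
          ∑ Q ∈ univ.filter (fun Q : Finset V => Q.card = q ∧ e ⊆ Q), Φ Q else 0,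
        map_add' := by
          intro Φ Ψ
          funext e
          by_cases hc : e.card = r + 1
          · simp [hc, Finset.sum_add_distrib]
          · simp [hc],
        map_smul' := by
          intro a Φ
          funext e
          by_cases hc : e.card = r + 1
          · simp [hc, Finset.mul_sum]
          · simp [hc] } with hB
    have hsub : podSet (r + 1) univ ⊆ (LinearMap.range B : Set (Finset V → ℤ)) := by
      rintro g ⟨L, hlen, hgood, _, rfl⟩
      obtain ⟨Φ, hΦ⟩ := pod_in_bdry (r + 1) q (by omega) (by omega) L hgood hlen
      exact ⟨Φ, funext hΦ⟩
    have hJ₂mem : (fun e : Finset V => if e.card = r + 1 then J₂ e else 0) ∈ LinearMap.range B :=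
      (Submodule.span_le.2 hsub) hns
    obtain ⟨Φ₂, hΦ₂⟩ := hJ₂mem
    refine ⟨Φ₁ + Φ₂, fun e hec => ?_⟩
    have h3 : ∑ Q ∈ univ.filter (fun Q : Finset V => Q.card = q ∧ e ⊆ Q), (Φ₁ + Φ₂) Q
        = (∑ Q ∈ univ.filter (fun Q : Finset V => Q.card = q ∧ e ⊆ Q), Φ₁ Q)
          + ∑ Q ∈ univ.filter (fun Q : Finset V => Q.card = q ∧ e ⊆ Q), Φ₂ Q := by
      simp [Finset.sum_add_distrib]
    have h4 : ∑ Q ∈ univ.filter (fun Q : Finset V => Q.card = q ∧ e ⊆ Q), Φ₂ Q = J₂ e := by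
      have h := congrFun hΦ₂ e
      rw [hB] at h
      simp only [LinearMap.coe_mk, AddHom.coe_mk] at h
      rw [if_pos hec, if_pos hec] at h
      exact h
    rw [h3, h4, hJ₂]
    simp only
    ring

end Aux

/-- for `n ≥ q+r`, an integer vector `J` on `r`-subsets of `[n]` is
`K^r_q`-divisible iff `C(q-i,r-i) ∣ ∑{J_e : I ⊆ e, |e| = r}` for all `0 ≤ i ≤ r`
and all `i`-subsets `I` of `[n]`. -/
theorem stmt7 (n q r : ℕ) (hqr : r < q) (hr : 1 ≤ r) (hn : q + r ≤ n)
    (J : Finset (Fin n) → ℤ) :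
    (∃ Φ : Finset (Fin n) → ℤ, ∀ e : Finset (Fin n), e.card = r →
        J e = ∑ Q ∈ univ.filter (fun Q : Finset (Fin n) => Q.card = q ∧ e ⊆ Q), Φ Q) ↔
      (∀ I : Finset (Fin n), I.card ≤ r →
        ((q - I.card).choose (r - I.card) : ℤ) ∣
          ∑ e ∈ univ.filter (fun e : Finset (Fin n) => e.card = r ∧ I ⊆ e), J e) := by
  constructor
  · rintro ⟨Φ, hΦ⟩ I hI
    have hsum : ∑ e ∈ univ.filter (fun e : Finset (Fin n) => e.card = r ∧ I ⊆ e), J e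
        = ∑ e ∈ univ.filter (fun e : Finset (Fin n) => e.card = r ∧ I ⊆ e),
          ∑ Q ∈ univ.filter (fun Q : Finset (Fin n) => Q.card = q ∧ e ⊆ Q), Φ Q := by
      refine Finset.sum_congr rfl fun e he => ?_
      simp only [Finset.mem_filter, Finset.mem_univ, true_and] at he
      exact hΦ e he.1
    rw [hsum, deg_of_bdry q r Φ I hI]
    exact Dvd.intro _ rfl
  · intro hdiv
    exact auxT q r hqr (by rw [Fintype.card_fin]; exact hn) J hdiv
end

section
/- (Freedman's inequality) Let (A_i)_{i=0}^t be a martingale with respect to a filtration (F_i), with |A_{i+1} - A_i| ≤ b for all i. Let E be the event that there exists j > 0 with A_j ≥ A_0 + a and Σ_{i<j} Var[A_{i+1} | F_i] ≤ v. Then P(E) ≤ exp(-a^2 / (2(v + ab))). -/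
/-!
For `0 ≤ l` with `l b ≤ 1`, Taylor's bound `exp y ≤ 1 + y + (1/2 + 2lb/9) y²` on `|y| ≤ l b` and
`1 + z ≤ exp z` give `E[exp (l ΔA_i) | F_i] ≤ exp (g Var[A_{i+1} | F_i])` with
`g = (1/2 + 2lb/9) l²`. Hence `M_j = exp (l (A_j - A_0) - g V_j)`, `V` the predictable quadratic
variation, is a positive supermartingale with `M_0 = 1`, and on the event in question some `M_j`
with `j ≤ t` reaches `exp (l a - g v)`. Optional stopping at the first such time and Markov's
inequality bound the probability by `exp (g v - l a)`, which for `l = a / (v + a b)` is at most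
`exp (-a² / (2 (v + a b)))`.
-/

open MeasureTheory

lemma exp_le_one_add_add_mul_sq_of_abs_le {y m : ℝ} (hy : |y| ≤ m) (hm : m ≤ 1) :
    Real.exp y ≤ 1 + y + (1 / 2 + 2 / 9 * m) * y ^ 2 := by
  have htaylor := (abs_le.mp (Real.exp_bound (hy.trans hm) (n := 3) (by norm_num))).2
  have hcube : |y| ^ 3 ≤ m * y ^ 2 := by
    rw [pow_succ, ← sq_abs y, mul_comm]
    exact mul_le_mul_of_nonneg_right hy (sq_nonneg _)
  norm_num [Finset.sum_range_succ, Nat.factorial] at htaylor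
  nlinarith

lemma freedman_exponent_le {a b v : ℝ} (ha : 0 < a) (hb : 0 ≤ b) (hv : 0 < v) :
    (1 / 2 + 2 / 9 * (a / (v + a * b) * b)) * (a / (v + a * b)) ^ 2 * v - a / (v + a * b) * a
      ≤ -a ^ 2 / (2 * (v + a * b)) := by
  have hs : 0 < v + a * b := by positivity
  rw [← sub_nonpos]
  field_simp
  have hab : 0 ≤ a * b := mul_nonneg ha.le hb
  nlinarith [mul_nonneg hab hv.le, mul_nonneg hab hab, sq_nonneg a]

section CondExp

variable {Ω : Type*} {m m0 : MeasurableSpace Ω} {μ : Measure Ω} [IsFiniteMeasure μ]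

lemma integrable_exp_mul_of_abs_le {X : Ω → ℝ} {b : ℝ} (hX : AEStronglyMeasurable X μ)
    (hXb : ∀ ω, |X ω| ≤ b) (l : ℝ) : Integrable (fun ω => Real.exp (l * X ω)) μ :=
  Integrable.of_bound (by fun_prop) (Real.exp (|l| * b)) (ae_of_all _ fun ω => by
    rw [Real.norm_eq_abs, Real.abs_exp, Real.exp_le_exp]
    exact (le_abs_self _).trans
      (by rw [abs_mul]; exact mul_le_mul_of_nonneg_left (hXb ω) (abs_nonneg l)))

lemma condExp_exp_mul_le_exp_mul_condExp_sq (hm : m ≤ m0) {X : Ω → ℝ} {b l : ℝ}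
    (hX : AEStronglyMeasurable X μ) (hXb : ∀ ω, |X ω| ≤ b) (hX0 : μ[X | m] =ᵐ[μ] 0)
    (hl : 0 ≤ l) (hlb : l * b ≤ 1) :
    μ[fun ω => Real.exp (l * X ω) | m] ≤ᵐ[μ]
      fun ω => Real.exp ((1 / 2 + 2 / 9 * (l * b)) * l ^ 2 * (μ[fun ω => X ω ^ 2 | m]) ω) := by
  set c := (1 / 2 + 2 / 9 * (l * b)) * l ^ 2
  have hXint : Integrable X μ := Integrable.of_bound hX b (ae_of_all _ hXb)
  have hX2int : Integrable (fun ω => X ω ^ 2) μ :=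
    Integrable.of_bound (hX.pow 2) (b ^ 2) (ae_of_all _ fun ω => by
      simpa [Real.norm_eq_abs, sq_abs] using pow_le_pow_left₀ (abs_nonneg _) (hXb ω) 2)
  have hpoint : ∀ ω, Real.exp (l * X ω) ≤ 1 + l * X ω + c * X ω ^ 2 := fun ω => by
    have hy : |l * X ω| ≤ l * b := by
      rw [abs_mul, abs_of_nonneg hl]; exact mul_le_mul_of_nonneg_left (hXb ω) hl
    calc Real.exp (l * X ω) ≤ 1 + l * X ω + (1 / 2 + 2 / 9 * (l * b)) * (l * X ω) ^ 2 :=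
          exp_le_one_add_add_mul_sq_of_abs_le hy hlb
      _ = 1 + l * X ω + c * X ω ^ 2 := by ring
  have hquad : μ[fun ω => 1 + l * X ω + c * X ω ^ 2 | m] =ᵐ[μ]
      fun ω => 1 + c * (μ[fun ω => X ω ^ 2 | m]) ω := by
    have hsplit : (fun ω => 1 + l * X ω + c * X ω ^ 2) =
        (fun _ => (1 : ℝ)) + (l • X + c • fun ω => X ω ^ 2) := by
      ext ω; simp only [Pi.add_apply, Pi.smul_apply, smul_eq_mul]; ring
    rw [hsplit]
    filter_upwards [condExp_add (integrable_const 1) ((hXint.smul l).add (hX2int.smul c)) m,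
      condExp_add (hXint.smul l) (hX2int.smul c) m, condExp_smul l X m,
      condExp_smul c (fun ω => X ω ^ 2) m, hX0] with ω h1 h2 h3 h4 h5
    simp only [h1, h2, h3, h4, h5, condExp_const hm, Pi.add_apply, Pi.smul_apply, Pi.zero_apply,
      smul_eq_mul]
    ring
  have hrhs_int : Integrable (fun ω => 1 + l * X ω + c * X ω ^ 2) μ :=
    ((integrable_const 1).add (hXint.const_mul l)).add (hX2int.const_mul c)
  filter_upwards [condExp_mono (m := m) (integrable_exp_mul_of_abs_le hX hXb l) hrhs_int
    (ae_of_all _ hpoint), hquad] with ω hmono hω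
  rw [hω] at hmono
  linarith [Real.add_one_le_exp (c * (μ[fun ω => X ω ^ 2 | m]) ω)]

end CondExp

section Maximal

variable {Ω : Type*} {m0 : MeasurableSpace Ω} {μ : Measure Ω} {F : Filtration ℕ m0}

lemma MeasureTheory.Supermartingale.measure_exists_ge_le [IsFiniteMeasure μ] {M : ℕ → Ω → ℝ}
    (hM : Supermartingale M F μ) (hM_nonneg : 0 ≤ M) {x : ℝ} (hx : 0 < x) (t : ℕ) :
    μ {ω | ∃ j ≤ t, x ≤ M j ω} ≤ ENNReal.ofReal ((∫ ω, M 0 ω ∂μ) / x) := by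
  set τ : Ω → ℕ∞ := fun ω => (hittingBtwn M (Set.Ici x) 0 t ω : ℕ)
  have hτ : IsStoppingTime F τ :=
    hM.stronglyAdapted.adapted.isStoppingTime_hittingBtwn measurableSet_Ici
  have hτ_le : ∀ ω, τ ω ≤ t := fun ω => WithTop.coe_le_coe.mpr (hittingBtwn_le ω)
  have hsub : {ω | ∃ j ≤ t, x ≤ M j ω} ⊆ {ω | x ≤ stoppedValue M τ ω} :=
    fun ω ⟨j, hjt, hj⟩ => stoppedValue_hittingBtwn_mem ⟨j, ⟨Nat.zero_le _, hjt⟩, hj⟩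
  have hstop : ∫ ω, stoppedValue M τ ω ∂μ ≤ ∫ ω, M 0 ω ∂μ := by
    have h : ∫ ω, -M 0 ω ∂μ ≤ ∫ ω, -stoppedValue M τ ω ∂μ :=
      hM.neg.expected_stoppedValue_mono (isStoppingTime_const F 0) hτ (fun _ => bot_le) hτ_le
    rwa [integral_neg, integral_neg, neg_le_neg_iff] at h
  have hmarkov : x * μ.real {ω | x ≤ stoppedValue M τ ω} ≤ ∫ ω, stoppedValue M τ ω ∂μ :=
    mul_meas_ge_le_integral_of_nonneg (ae_of_all _ fun ω => hM_nonneg _ ω)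
      (integrable_stoppedValue ℕ hτ hM.integrable hτ_le) x
  calc μ {ω | ∃ j ≤ t, x ≤ M j ω} ≤ μ {ω | x ≤ stoppedValue M τ ω} := measure_mono hsub
    _ = ENNReal.ofReal (μ.real {ω | x ≤ stoppedValue M τ ω}) :=
      (ofReal_measureReal (measure_ne_top _ _)).symm
    _ ≤ ENNReal.ofReal ((∫ ω, M 0 ω ∂μ) / x) :=
      ENNReal.ofReal_le_ofReal (by rw [le_div_iff₀ hx]; linarith)

end Maximal

section Freedman

variable {Ω : Type*} {m0 : MeasurableSpace Ω} {μ : Measure Ω} {F : Filtration ℕ m0}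
  {A : ℕ → Ω → ℝ}

noncomputable def predictableQuadVar (μ : Measure Ω) (F : Filtration ℕ m0) (A : ℕ → Ω → ℝ)
    (j : ℕ) (ω : Ω) : ℝ :=
  ∑ i ∈ Finset.range j, (μ[fun ω' => (A (i + 1) ω' - A i ω') ^ 2 | F i]) ω

lemma predictableQuadVar_succ (j : ℕ) (ω : Ω) :
    predictableQuadVar μ F A (j + 1) ω =
      predictableQuadVar μ F A j ω + (μ[fun ω' => (A (j + 1) ω' - A j ω') ^ 2 | F j]) ω :=
  Finset.sum_range_succ _ _

lemma stronglyAdapted_predictableQuadVar : StronglyAdapted F (predictableQuadVar μ F A) :=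
  fun _ => Finset.stronglyMeasurable_fun_sum _ fun _ hi =>
    stronglyMeasurable_condExp.mono (F.mono (Finset.mem_range.mp hi).le)

lemma ae_predictableQuadVar_nonneg : ∀ᵐ ω ∂μ, ∀ j, 0 ≤ predictableQuadVar μ F A j ω := by
  have hcond : ∀ᵐ ω ∂μ, ∀ i, 0 ≤ (μ[fun ω' => (A (i + 1) ω' - A i ω') ^ 2 | F i]) ω :=
    ae_all_iff.mpr fun i => condExp_nonneg (ae_of_all _ fun ω => sq_nonneg _)
  filter_upwards [hcond] with ω hω j
  exact Finset.sum_nonneg fun i _ => hω i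

noncomputable def freedmanProcess (μ : Measure Ω) (F : Filtration ℕ m0) (A : ℕ → Ω → ℝ)
    (l g : ℝ) (j : ℕ) (ω : Ω) : ℝ :=
  Real.exp (l * (A j ω - A 0 ω) - g * predictableQuadVar μ F A j ω)

variable {l g : ℝ}

lemma freedmanProcess_pos (j : ℕ) (ω : Ω) : 0 < freedmanProcess μ F A l g j ω := Real.exp_pos _

@[simp]
lemma freedmanProcess_zero : freedmanProcess μ F A l g 0 = 1 := by
  ext ω; simp [freedmanProcess, predictableQuadVar]

lemma freedmanProcess_succ (j : ℕ) (ω : Ω) :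
    freedmanProcess μ F A l g (j + 1) ω =
      freedmanProcess μ F A l g j ω *
        Real.exp (-(g * (μ[fun ω' => (A (j + 1) ω' - A j ω') ^ 2 | F j]) ω)) *
        Real.exp (l * (A (j + 1) ω - A j ω)) := by
  simp only [freedmanProcess, predictableQuadVar_succ, ← Real.exp_add]
  ring_nf

lemma exp_le_freedmanProcess {a v : ℝ} (hl : 0 ≤ l) (hg : 0 ≤ g) {j : ℕ} {ω : Ω}
    (hA : A 0 ω + a ≤ A j ω) (hV : predictableQuadVar μ F A j ω ≤ v) :
    Real.exp (l * a - g * v) ≤ freedmanProcess μ F A l g j ω := by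
  rw [freedmanProcess, Real.exp_le_exp]
  nlinarith [mul_le_mul_of_nonneg_left hV hg]

lemma stronglyAdapted_freedmanProcess (hA : StronglyAdapted F A) :
    StronglyAdapted F (freedmanProcess μ F A l g) := fun j =>
  Real.continuous_exp.comp_stronglyMeasurable
    ((stronglyMeasurable_const.mul ((hA j).sub ((hA 0).mono (F.mono (Nat.zero_le j))))).sub
      (stronglyMeasurable_const.mul (stronglyAdapted_predictableQuadVar j)))

lemma abs_sub_zero_le_mul_of_abs_sub_le {b : ℝ}
    (hbdd : ∀ i ω, |A (i + 1) ω - A i ω| ≤ b) (j : ℕ) (ω : Ω) : |A j ω - A 0 ω| ≤ j * b := by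
  induction j with
  | zero => simp
  | succ j ih =>
    calc |A (j + 1) ω - A 0 ω| ≤ |A (j + 1) ω - A j ω| + |A j ω - A 0 ω| := abs_sub_le _ _ _
      _ ≤ b + j * b := add_le_add (hbdd j ω) ih
      _ = (j + 1 : ℕ) * b := by push_cast; ring

lemma integrable_freedmanProcess [IsFiniteMeasure μ] {b : ℝ} (hA : StronglyAdapted F A)
    (hbdd : ∀ i ω, |A (i + 1) ω - A i ω| ≤ b) (hl : 0 ≤ l) (hg : 0 ≤ g) (j : ℕ) :
    Integrable (freedmanProcess μ F A l g j) μ := by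
  refine Integrable.of_bound
    ((stronglyAdapted_freedmanProcess hA j).mono (F.le j)).aestronglyMeasurable
    (Real.exp (l * (j * b))) ?_
  filter_upwards [ae_predictableQuadVar_nonneg] with ω hV
  rw [Real.norm_eq_abs, freedmanProcess, Real.abs_exp, Real.exp_le_exp]
  have hdrift := mul_le_mul_of_nonneg_left
    ((le_abs_self _).trans (abs_sub_zero_le_mul_of_abs_sub_le hbdd j ω)) hl
  nlinarith [mul_nonneg hg (hV j)]

lemma MeasureTheory.Martingale.condExp_sub_ae_eq_zero [IsFiniteMeasure μ]
    (hA : Martingale A F μ) (i : ℕ) :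
    μ[A (i + 1) - A i | F i] =ᵐ[μ] 0 := by
  filter_upwards [condExp_sub (hA.integrable (i + 1)) (hA.integrable i) (F i),
    hA.condExp_ae_eq (Nat.le_succ i), hA.condExp_ae_eq (le_refl i)] with ω h h1 h2
  simp [h, h1, h2]

lemma MeasureTheory.Martingale.supermartingale_freedmanProcess [IsFiniteMeasure μ] {b : ℝ}
    (hA : Martingale A F μ) (hbdd : ∀ i ω, |A (i + 1) ω - A i ω| ≤ b) (hb : 0 ≤ b) (hl : 0 ≤ l)
    (hlb : l * b ≤ 1) :
    Supermartingale (freedmanProcess μ F A l ((1 / 2 + 2 / 9 * (l * b)) * l ^ 2)) F μ := by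
  set g := (1 / 2 + 2 / 9 * (l * b)) * l ^ 2
  have hadapt : StronglyAdapted F (freedmanProcess μ F A l g) :=
    stronglyAdapted_freedmanProcess hA.stronglyAdapted
  have hint : ∀ j, Integrable (freedmanProcess μ F A l g j) μ :=
    integrable_freedmanProcess hA.stronglyAdapted hbdd hl (by positivity)
  refine supermartingale_nat hadapt hint fun i => ?_
  set W := μ[fun ω' => (A (i + 1) ω' - A i ω') ^ 2 | F i]
  set factor : Ω → ℝ := fun ω => freedmanProcess μ F A l g i ω * Real.exp (-(g * W ω))
  have hsplit : freedmanProcess μ F A l g (i + 1) =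
      factor * fun ω => Real.exp (l * (A (i + 1) ω - A i ω)) :=
    funext (freedmanProcess_succ i)
  have hfactor : StronglyMeasurable[F i] factor :=
    (hadapt i).mul (Real.continuous_exp.comp_stronglyMeasurable
      (stronglyMeasurable_const.mul stronglyMeasurable_condExp).neg)
  have hincr_meas : AEStronglyMeasurable (fun ω => A (i + 1) ω - A i ω) μ :=
    ((hA.integrable (i + 1)).sub (hA.integrable i)).aestronglyMeasurable
  rw [hsplit]
  filter_upwards [condExp_mul_of_stronglyMeasurable_left hfactor (hsplit ▸ hint (i + 1))
      (integrable_exp_mul_of_abs_le hincr_meas (hbdd i) l),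
    condExp_exp_mul_le_exp_mul_condExp_sq (F.le i) hincr_meas (hbdd i)
      (hA.condExp_sub_ae_eq_zero i) hl hlb] with ω hpull hω
  rw [hpull, Pi.mul_apply]
  calc factor ω * (μ[fun ω => Real.exp (l * (A (i + 1) ω - A i ω)) | F i]) ω
      ≤ factor ω * Real.exp (g * W ω) := mul_le_mul_of_nonneg_left hω
        (mul_pos (freedmanProcess_pos i ω) (Real.exp_pos _)).le
    _ = freedmanProcess μ F A l g i ω := by
      rw [mul_assoc, ← Real.exp_add, neg_add_cancel, Real.exp_zero, mul_one]

end Freedman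


/-- Freedman's inequality: if `(A_i)` is a martingale with
increments bounded by `b`, and `E` is the event that for some `j > 0` we have
`A_j ≥ A_0 + a` while `∑_{i<j} Var[A_{i+1} | F_i] ≤ v`, then
`P(E) ≤ exp(-a²/(2(v+ab)))`. -/
theorem stmt8 {Ω : Type*} {m0 : MeasurableSpace Ω} {μ : Measure Ω}
    [IsProbabilityMeasure μ]
    (F : Filtration ℕ m0) (A : ℕ → Ω → ℝ) (t : ℕ) (a b v : ℝ)
    (ha : 0 < a) (hb : 0 < b) (hv : 0 < v)
    (hmart : Martingale A F μ)
    (hbdd : ∀ i ω, |A (i + 1) ω - A i ω| ≤ b) :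
    μ {ω | ∃ j, 0 < j ∧ j ≤ t ∧ A 0 ω + a ≤ A j ω ∧
        ∑ i ∈ Finset.range j,
          (μ[fun ω' => (A (i + 1) ω' - A i ω') ^ 2 | F i]) ω ≤ v}
      ≤ ENNReal.ofReal (Real.exp (-a ^ 2 / (2 * (v + a * b)))) := by
  set l := a / (v + a * b)
  set g := (1 / 2 + 2 / 9 * (l * b)) * l ^ 2
  have hl : 0 ≤ l := by positivity
  have hg : 0 ≤ g := by positivity
  have hlb : l * b ≤ 1 := by
    rw [div_mul_eq_mul_div, div_le_one (by positivity)]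
    linarith
  have hsuper := hmart.supermartingale_freedmanProcess hbdd hb.le hl hlb
  calc μ {ω | ∃ j, 0 < j ∧ j ≤ t ∧ A 0 ω + a ≤ A j ω ∧ predictableQuadVar μ F A j ω ≤ v}
      ≤ μ {ω | ∃ j ≤ t, Real.exp (l * a - g * v) ≤ freedmanProcess μ F A l g j ω} :=
        measure_mono fun _ ⟨j, _, hjt, hAj, hVj⟩ =>
          ⟨j, hjt, exp_le_freedmanProcess hl hg hAj hVj⟩
    _ ≤ ENNReal.ofReal ((∫ ω, freedmanProcess μ F A l g 0 ω ∂μ) / Real.exp (l * a - g * v)) :=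
        hsuper.measure_exists_ge_le (fun j ω => (freedmanProcess_pos j ω).le) (Real.exp_pos _) t
    _ = ENNReal.ofReal (Real.exp (g * v - l * a)) := by
        rw [freedmanProcess_zero]
        simp [← Real.exp_neg]
    _ ≤ ENNReal.ofReal (Real.exp (-a ^ 2 / (2 * (v + a * b)))) :=
        ENNReal.ofReal_le_ofReal (Real.exp_le_exp.mpr (freedman_exponent_le ha hb.le hv))
end

section
/- Let X = Σ_{i=1}^n X_i where |X_i| ≤ C for each i, and suppose Σ_i E[|X_i| | X_1,...,X_{i-1}] ≤ μ pointwise. Then for any c > 0, P(|X| > (1+c)μ) ≤ 2 exp(-μ c^2 / (2(1+2c)C)). -/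
/-!
With `Sₙ = ∑ |Xᵢ|`, `Aₙ = ∑ E[|Xᵢ| | ℱᵢ₋₁]` and `κ = (e^{tC} - 1) / C`, the process
`exp (t Sₙ - κ Aₙ)` is a supermartingale: by convexity `e^{ty} ≤ 1 + κ y` on `[0, C]`, so
`E[e^{t |Xᵢ|} | ℱᵢ₋₁] ≤ 1 + κ E[|Xᵢ| | ℱᵢ₋₁] ≤ exp (κ E[|Xᵢ| | ℱᵢ₋₁])`. As `Aₙ ≤ μ`, the moment
generating function of `Sₙ` is at most `e^{κμ}`, and Chernoff's bound at `t = log (1 + c) / C`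
gives Bennett's bound `exp (-(μ / C) ((1 + c) log (1 + c) - c))`. This is at most
`exp (-μ c² / (2 (1 + 2c) C))` because `log (1 + c) ≥ 2c / (2 + c)`, and `|X| ≤ Sₙ`.
-/

open MeasureTheory ProbabilityTheory Finset Real

lemma sq_div_le_one_add_mul_log_one_add_sub {c : ℝ} (hc : 0 ≤ c) :
    c ^ 2 / (2 * (1 + 2 * c)) ≤ (1 + c) * log (1 + c) - c := by
  have h := le_log_one_add_of_nonneg hc
  rw [div_le_iff₀ (by linarith)] at h
  rw [div_le_iff₀ (by positivity)]
  nlinarith [mul_le_mul_of_nonneg_left h (by linarith : (0 : ℝ) ≤ 1 + c)]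

lemma exp_mul_le_one_add_mul {t C y : ℝ} (hC : 0 < C) (hy0 : 0 ≤ y) (hyC : y ≤ C) :
    exp (t * y) ≤ 1 + (exp (t * C) - 1) / C * y := by
  have hw : y / C ≤ 1 := (div_le_one hC).mpr hyC
  have h := convexOn_exp.2 (Set.mem_univ 0) (Set.mem_univ (t * C))
    (by linarith : 0 ≤ 1 - y / C) (div_nonneg hy0 hC.le) (by ring)
  simp only [smul_eq_mul, mul_zero, zero_add, exp_zero, mul_one] at h
  calc exp (t * y) = exp (y / C * (t * C)) := by field_simp
    _ ≤ 1 - y / C + y / C * exp (t * C) := h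
    _ = 1 + (exp (t * C) - 1) / C * y := by ring

section ConditionalExpectation

variable {Ω : Type*} {m m0 : MeasurableSpace Ω} {P : Measure Ω}

lemma condExp_exp_mul_le [IsFiniteMeasure P] (hm : m ≤ m0) {Y : Ω → ℝ} {t C : ℝ}
    (hC : 0 < C) (hYm : StronglyMeasurable Y) (hY0 : ∀ ω, 0 ≤ Y ω) (hYC : ∀ ω, Y ω ≤ C) :
    P[fun ω => exp (t * Y ω) | m]
      ≤ᵐ[P] fun ω => exp ((exp (t * C) - 1) / C * P[Y | m] ω) := by
  set κ := (exp (t * C) - 1) / C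
  have hYint : Integrable Y P :=
    .of_bound hYm.aestronglyMeasurable C (.of_forall fun ω => by
      rw [norm_of_nonneg (hY0 ω)]; exact hYC ω)
  have hexp_int : Integrable (fun ω => exp (t * Y ω)) P :=
    integrable_exp_mul_of_mem_Icc hYm.aemeasurable (.of_forall fun ω => ⟨hY0 ω, hYC ω⟩)
  have hchord : P[fun ω => exp (t * Y ω) | m] ≤ᵐ[P] P[(fun _ => 1) + κ • Y | m] :=
    condExp_mono hexp_int ((integrable_const 1).add (hYint.smul κ))
      (.of_forall fun ω => exp_mul_le_one_add_mul hC (hY0 ω) (hYC ω))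
  filter_upwards [hchord, condExp_add (integrable_const 1) (hYint.smul κ) m,
    condExp_smul κ Y m] with ω hchord hadd hsmul
  rw [hadd, Pi.add_apply, condExp_const hm, hsmul] at hchord
  exact hchord.trans (by simpa [add_comm] using add_one_le_exp (κ * P[Y | m] ω))

lemma integral_mul_le_of_condExp_le (hm : m ≤ m0) [SigmaFinite (P.trim hm)] {g f h : Ω → ℝ}
    (hgm : StronglyMeasurable[m] g) (hg0 : 0 ≤ᵐ[P] g) (hgf : Integrable (g * f) P)
    (hf : Integrable f P) (hgh : Integrable (g * h) P) (hfh : P[f | m] ≤ᵐ[P] h) :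
    ∫ ω, g ω * f ω ∂P ≤ ∫ ω, g ω * h ω ∂P := by
  have hpull := condExp_mul_of_stronglyMeasurable_left (m := m) hgm hgf hf
  calc ∫ ω, g ω * f ω ∂P = ∫ ω, P[g * f | m] ω ∂P := (integral_condExp hm).symm
    _ ≤ ∫ ω, g ω * h ω ∂P := by
      refine integral_mono_ae integrable_condExp hgh ?_
      filter_upwards [hpull, hg0, hfh] with ω hpull hg0 hfh
      rw [hpull]
      exact mul_le_mul_of_nonneg_left hfh hg0

end ConditionalExpectation

section ExponentialSupermartingale

variable {Ω : Type*} {m0 : MeasurableSpace Ω} {P : Measure Ω} {ℱ : Filtration ℕ m0}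
  {Y : ℕ → Ω → ℝ} {t κ C : ℝ}

/-- `exp (t Sₙ - κ Aₙ)` for the partial sums `Sₙ = ∑_{i ≤ n} Yᵢ` and their compensator
`Aₙ = ∑_{i ≤ n} E[Yᵢ | ℱ_{i-1}]`. -/
noncomputable def expCompensated (P : Measure Ω) (ℱ : Filtration ℕ m0) (Y : ℕ → Ω → ℝ)
    (t κ : ℝ) (n : ℕ) (ω : Ω) : ℝ :=
  exp (∑ i ∈ Icc 1 n, (t * Y i ω - κ * P[Y i | ℱ (i - 1)] ω))

lemma expCompensated_succ (n : ℕ) (ω : Ω) :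
    expCompensated P ℱ Y t κ (n + 1) ω =
      expCompensated P ℱ Y t κ n ω * exp (-(κ * P[Y (n + 1) | ℱ n] ω)) *
        exp (t * Y (n + 1) ω) := by
  rw [expCompensated, expCompensated, sum_Icc_succ_top (by omega), Nat.add_sub_cancel,
    sub_eq_add_neg, exp_add, exp_add]
  ring

lemma exp_mul_sum_eq_expCompensated_mul (n : ℕ) (ω : Ω) :
    exp (t * ∑ i ∈ Icc 1 n, Y i ω) =
      expCompensated P ℱ Y t κ n ω * exp (κ * ∑ i ∈ Icc 1 n, P[Y i | ℱ (i - 1)] ω) := by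
  rw [expCompensated, ← exp_add, sum_sub_distrib, mul_sum, mul_sum, sub_add_cancel]

lemma stronglyMeasurable_expCompensated (hY : StronglyAdapted ℱ Y) (n : ℕ) :
    StronglyMeasurable[ℱ n] (expCompensated P ℱ Y t κ n) := by
  refine continuous_exp.comp_stronglyMeasurable
    (Finset.stronglyMeasurable_fun_sum _ fun i hi => ?_)
  have hi : i ≤ n := (mem_Icc.mp hi).2
  exact (((hY i).mono (ℱ.mono hi)).const_mul t).sub
    ((stronglyMeasurable_condExp.mono (ℱ.mono (by omega))).const_mul κ)

lemma expCompensated_ae_le (ht : 0 ≤ t) (hκ : 0 ≤ κ) (hY0 : ∀ i ω, 0 ≤ Y i ω)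
    (hYC : ∀ i ω, Y i ω ≤ C) (n : ℕ) :
    ∀ᵐ ω ∂P, expCompensated P ℱ Y t κ n ω ≤ exp (n * (t * C)) := by
  have hE0 : ∀ᵐ ω ∂P, ∀ i, 0 ≤ P[Y i | ℱ (i - 1)] ω :=
    ae_all_iff.mpr fun i => condExp_nonneg (.of_forall (hY0 i))
  filter_upwards [hE0] with ω hE0
  rw [expCompensated, exp_le_exp]
  calc ∑ i ∈ Icc 1 n, (t * Y i ω - κ * P[Y i | ℱ (i - 1)] ω) ≤ ∑ i ∈ Icc 1 n, t * C :=
        sum_le_sum fun i _ => by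
          nlinarith [mul_le_mul_of_nonneg_left (hYC i ω) ht, mul_nonneg hκ (hE0 i)]
    _ = n * (t * C) := by simp

variable [IsProbabilityMeasure P]

lemma integrable_expCompensated (hY : StronglyAdapted ℱ Y) (ht : 0 ≤ t) (hκ : 0 ≤ κ)
    (hY0 : ∀ i ω, 0 ≤ Y i ω) (hYC : ∀ i ω, Y i ω ≤ C) (n : ℕ) :
    Integrable (expCompensated P ℱ Y t κ n) P := by
  refine .of_bound ((stronglyMeasurable_expCompensated hY n).mono (ℱ.le n)).aestronglyMeasurable
    (exp (n * (t * C))) ?_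
  filter_upwards [expCompensated_ae_le (ℱ := ℱ) ht hκ hY0 hYC n] with ω hω
  exact (norm_of_nonneg (exp_pos _).le).trans_le hω

lemma integral_expCompensated_le_one (hY : StronglyAdapted ℱ Y) (ht : 0 ≤ t) (hC : 0 < C)
    (hY0 : ∀ i ω, 0 ≤ Y i ω) (hYC : ∀ i ω, Y i ω ≤ C) (n : ℕ) :
    ∫ ω, expCompensated P ℱ Y t ((exp (t * C) - 1) / C) n ω ∂P ≤ 1 := by
  set κ := (exp (t * C) - 1) / C
  have hκ : 0 ≤ κ := div_nonneg (sub_nonneg.mpr (one_le_exp (by positivity))) hC.le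
  have hM := integrable_expCompensated (P := P) hY ht hκ hY0 hYC
  induction n with
  | zero => simp [expCompensated]
  | succ n ih =>
    set E := P[Y (n + 1) | ℱ n]
    set g := fun ω => expCompensated P ℱ Y t κ n ω * exp (-(κ * E ω))
    have hgm : StronglyMeasurable[ℱ n] g := (stronglyMeasurable_expCompensated hY n).mul
      (continuous_exp.comp_stronglyMeasurable (stronglyMeasurable_condExp.const_mul κ).neg)
    have hgh : (g * fun ω => exp (κ * E ω)) = expCompensated P ℱ Y t κ n := by
      ext ω; simp [g, mul_assoc, ← exp_add]
    have hgf : (g * fun ω => exp (t * Y (n + 1) ω)) = expCompensated P ℱ Y t κ (n + 1) := by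
      ext ω; simp only [g, E, Pi.mul_apply, expCompensated_succ]
    have hYm := (hY (n + 1)).mono (ℱ.le (n + 1))
    calc ∫ ω, expCompensated P ℱ Y t κ (n + 1) ω ∂P
        = ∫ ω, g ω * exp (t * Y (n + 1) ω) ∂P := by rw [← hgf]; rfl
      _ ≤ ∫ ω, g ω * exp (κ * E ω) ∂P :=
        integral_mul_le_of_condExp_le (ℱ.le n) hgm
          (.of_forall fun ω => mul_nonneg (exp_pos _).le (exp_pos _).le) (hgf ▸ hM (n + 1))
          (integrable_exp_mul_of_mem_Icc hYm.aemeasurable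
            (.of_forall fun ω => ⟨hY0 _ ω, hYC _ ω⟩))
          (hgh ▸ hM n) (condExp_exp_mul_le (ℱ.le n) hC hYm (hY0 _) (hYC _))
      _ = ∫ ω, expCompensated P ℱ Y t κ n ω ∂P := by rw [← hgh]; rfl
      _ ≤ 1 := ih

lemma integrable_exp_mul_sum (hY : StronglyAdapted ℱ Y) (hY0 : ∀ i ω, 0 ≤ Y i ω)
    (hYC : ∀ i ω, Y i ω ≤ C) (n : ℕ) :
    Integrable (fun ω => exp (t * ∑ i ∈ Icc 1 n, Y i ω)) P :=
  integrable_exp_mul_of_mem_Icc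
    (Finset.measurable_fun_sum _ fun i _ => ((hY i).mono (ℱ.le i)).measurable).aemeasurable
    (.of_forall fun ω => ⟨sum_nonneg fun i _ => hY0 i ω, sum_le_sum fun i _ => hYC i ω⟩)

lemma mgf_sum_le (hY : StronglyAdapted ℱ Y) (ht : 0 ≤ t) (hC : 0 < C)
    (hY0 : ∀ i ω, 0 ≤ Y i ω) (hYC : ∀ i ω, Y i ω ≤ C) {n : ℕ} {μ : ℝ}
    (hA : ∀ᵐ ω ∂P, ∑ i ∈ Icc 1 n, P[Y i | ℱ (i - 1)] ω ≤ μ) :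
    mgf (fun ω => ∑ i ∈ Icc 1 n, Y i ω) P t ≤ exp ((exp (t * C) - 1) / C * μ) := by
  set κ := (exp (t * C) - 1) / C
  have hκ : 0 ≤ κ := div_nonneg (sub_nonneg.mpr (one_le_exp (by positivity))) hC.le
  have hM := integrable_expCompensated (P := P) hY ht hκ hY0 hYC n
  calc mgf (fun ω => ∑ i ∈ Icc 1 n, Y i ω) P t
      ≤ ∫ ω, expCompensated P ℱ Y t κ n ω * exp (κ * μ) ∂P := by
        refine integral_mono_ae (integrable_exp_mul_sum hY hY0 hYC n) (hM.mul_const _) ?_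
        filter_upwards [hA] with ω hA
        rw [exp_mul_sum_eq_expCompensated_mul (P := P) (ℱ := ℱ) (κ := κ)]
        gcongr
        exact (exp_pos _).le
    _ = (∫ ω, expCompensated P ℱ Y t κ n ω ∂P) * exp (κ * μ) := integral_mul_const _ _
    _ ≤ exp (κ * μ) :=
        mul_le_of_le_one_left (exp_pos _).le (integral_expCompensated_le_one hY ht hC hY0 hYC n)

/-- Bennett's inequality for adapted sums, with the sum of conditional means in place of the
mean. -/
lemma measureReal_sum_ge_le_exp_bennett (hY : StronglyAdapted ℱ Y) {c : ℝ} (hc : 0 ≤ c)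
    (hC : 0 < C) (hY0 : ∀ i ω, 0 ≤ Y i ω) (hYC : ∀ i ω, Y i ω ≤ C) {n : ℕ} {μ : ℝ}
    (hA : ∀ᵐ ω ∂P, ∑ i ∈ Icc 1 n, P[Y i | ℱ (i - 1)] ω ≤ μ) :
    P.real {ω | (1 + c) * μ ≤ ∑ i ∈ Icc 1 n, Y i ω}
      ≤ exp (-(μ / C) * ((1 + c) * log (1 + c) - c)) := by
  set t := log (1 + c) / C
  have ht : 0 ≤ t := div_nonneg (log_nonneg (by linarith)) hC.le
  have hκ : (exp (t * C) - 1) / C = c / C := by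
    rw [div_mul_cancel₀ _ hC.ne', exp_log (by linarith), add_sub_cancel_left]
  calc P.real {ω | (1 + c) * μ ≤ ∑ i ∈ Icc 1 n, Y i ω}
      ≤ exp (-t * ((1 + c) * μ)) * mgf (fun ω => ∑ i ∈ Icc 1 n, Y i ω) P t :=
        measure_ge_le_exp_mul_mgf _ ht (integrable_exp_mul_sum hY hY0 hYC n)
    _ ≤ exp (-t * ((1 + c) * μ)) * exp (c / C * μ) := by
        rw [← hκ]; gcongr; exact mgf_sum_le hY ht hC hY0 hYC hA
    _ = exp (-(μ / C) * ((1 + c) * log (1 + c) - c)) := by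
        rw [← exp_add]; congr 1; ring

end ExponentialSupermartingale

theorem stmt12_general {Ω : Type*} {m0 : MeasurableSpace Ω} {P : Measure Ω}
    [IsProbabilityMeasure P]
    (n : ℕ) (X : ℕ → Ω → ℝ) (C c μ : ℝ)
    (hC : 0 < C) (hc : 0 < c) (hμ : 0 < μ)
    (hmeas : ∀ i, StronglyMeasurable (X i))
    (hbdd : ∀ i ω, |X i ω| ≤ C)
    (hcond : ∀ ω, ∑ i ∈ Finset.Icc 1 n,
        (P[fun ω' => |X i ω'| | (MeasureTheory.Filtration.natural X hmeas) (i - 1)]) ω ≤ μ) :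
    P {ω | (1 + c) * μ < |∑ i ∈ Finset.Icc 1 n, X i ω|}
      ≤ ENNReal.ofReal (2 * Real.exp (-μ * c ^ 2 / (2 * (1 + 2 * c) * C))) := by
  have hY : StronglyAdapted (Filtration.natural X hmeas) fun i ω => |X i ω| := fun i =>
    continuous_abs.comp_stronglyMeasurable (Filtration.stronglyAdapted_natural hmeas i)
  have htail := measureReal_sum_ge_le_exp_bennett hY hc.le hC (fun i ω => abs_nonneg _) hbdd
    (.of_forall hcond)
  have hsub : {ω | (1 + c) * μ < |∑ i ∈ Icc 1 n, X i ω|}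
      ⊆ {ω | (1 + c) * μ ≤ ∑ i ∈ Icc 1 n, |X i ω|} :=
    Set.ofPred_subset_ofPred.mpr fun ω hω => hω.le.trans (abs_sum_le_sum_abs _ _)
  have hexponent :
      -(μ / C) * ((1 + c) * log (1 + c) - c) ≤ -μ * c ^ 2 / (2 * (1 + 2 * c) * C) :=
    calc -(μ / C) * ((1 + c) * log (1 + c) - c) ≤ -(μ / C) * (c ^ 2 / (2 * (1 + 2 * c))) :=
          mul_le_mul_of_nonpos_left (sq_div_le_one_add_mul_log_one_add_sub hc.le)
            (neg_nonpos.mpr (div_pos hμ hC).le)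
      _ = -μ * c ^ 2 / (2 * (1 + 2 * c) * C) := by field_simp
  rw [ENNReal.le_ofReal_iff_toReal_le (measure_ne_top _ _) (by positivity)]
  calc P.real {ω | (1 + c) * μ < |∑ i ∈ Icc 1 n, X i ω|}
      ≤ P.real {ω | (1 + c) * μ ≤ ∑ i ∈ Icc 1 n, |X i ω|} := measureReal_mono hsub
    _ ≤ exp (-μ * c ^ 2 / (2 * (1 + 2 * c) * C)) := htail.trans (exp_le_exp.mpr hexponent)
    _ ≤ 2 * exp (-μ * c ^ 2 / (2 * (1 + 2 * c) * C)) :=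
        le_mul_of_one_le_left (exp_pos _).le one_le_two

/-- generalized Chernoff bound, adaptive case: if `X = ∑_{i=1}^n X_i`
with `|X_i| ≤ C` and `∑_i E[|X_i| | X_1,…,X_{i-1}] ≤ μ` pointwise (conditioning on
the natural filtration of the sequence), then for `c > 0`,
`P(|X| > (1+c)μ) ≤ 2 exp(-μc²/(2(1+2c)C))`. -/
theorem stmt12 {Ω : Type*} {m0 : MeasurableSpace Ω} {P : Measure Ω}
    [IsProbabilityMeasure P]
    (n : ℕ) (X : ℕ → Ω → ℝ) (C c μ : ℝ)
    (hC : 0 < C) (hc : 0 < c) (hμ : 0 < μ)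
    (hmeas : ∀ i, StronglyMeasurable (X i))
    (h0 : X 0 = 0)
    (hbdd : ∀ i ω, |X i ω| ≤ C)
    (hcond : ∀ ω, ∑ i ∈ Finset.Icc 1 n,
        (P[fun ω' => |X i ω'| | (MeasureTheory.Filtration.natural X hmeas) (i - 1)]) ω ≤ μ) :
    P {ω | (1 + c) * μ < |∑ i ∈ Finset.Icc 1 n, X i ω|}
      ≤ ENNReal.ofReal (2 * Real.exp (-μ * c ^ 2 / (2 * (1 + 2 * c) * C))) :=
  stmt12_general (m0 := m0) n X C c μ hC hc hμ hmeas hbdd hcond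
end
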